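/- arXiv:2204.03875 — 6 statements merged into one kernel-verified Lean document; each statement's English description precedes it below -/
import Mathlib

section
/- For any points p, q ∈ ℝ^d and any integer j ≥ 1, if ‖p−q‖_∞ < 2^{j-1}, then there exists a level-j cell that contains both p and q. -/
/-! Two points at distance `< h` lie in `[n h, (n + 2) h]` with `n = ⌊min x y / h⌋`; writing
`n = 2 m + b` turns this into an interval `[m (2h) + b h, m (2h) + b h + 2h]`, and taking such an
interval in every coordinate with `h = 2^(j-1)` gives a level-`j` cell. -/

noncomputable section

/-- The level-`i` cell determined by `m ∈ ℤ^d` and `b ∈ {0,1}^d`: the axis-parallel cube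
`∏_k [m_k·2^i + b_k·2^(i-1), m_k·2^i + b_k·2^(i-1) + 2^i]`. -/
def levelCell (d i : ℕ) (m : Fin d → ℤ) (b : Fin d → Bool) : Set (Fin d → ℝ) :=
  {p | ∀ k : Fin d,
    (m k : ℝ) * 2 ^ i + (if b k then (2 : ℝ) ^ (i - 1) else 0) ≤ p k ∧
    p k ≤ (m k : ℝ) * 2 ^ i + (if b k then (2 : ℝ) ^ (i - 1) else 0) + 2 ^ i}

open Set

lemma exists_int_mul_Icc_of_abs_sub_lt {x y h : ℝ} (hh : 0 < h) (hxy : |x - y| < h) :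
    ∃ n : ℤ, x ∈ Icc (n * h) (n * h + 2 * h) ∧ y ∈ Icc (n * h) (n * h + 2 * h) := by
  refine ⟨⌊min x y / h⌋, ?_⟩
  have hlo : (⌊min x y / h⌋ : ℝ) * h ≤ min x y := (le_div_iff₀ hh).mp (Int.floor_le _)
  have hhi : min x y < (⌊min x y / h⌋ + 1 : ℝ) * h := (div_lt_iff₀ hh).mp (Int.lt_floor_add_one _)
  have hspread : max x y - min x y < h := by rwa [max_sub_min_eq_abs, abs_sub_comm]
  have := min_le_left x y; have := min_le_right x y
  have := le_max_left x y; have := le_max_right x y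
  constructor <;> constructor <;> linarith

lemma Int.exists_mul_two_add_ite_eq (n : ℤ) (h : ℝ) :
    ∃ (m : ℤ) (b : Bool), (m : ℝ) * (2 * h) + (if b then h else 0) = n * h := by
  rcases Int.even_or_odd' n with ⟨m, rfl | rfl⟩
  · exact ⟨m, false, by push_cast; ring⟩
  · exact ⟨m, true, by simp only [if_true]; push_cast; ring⟩

lemma exists_shifted_Icc_of_abs_sub_lt {x y h : ℝ} (hh : 0 < h) (hxy : |x - y| < h) :
    ∃ (m : ℤ) (b : Bool),
      x ∈ Icc ((m : ℝ) * (2 * h) + (if b then h else 0))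
        (m * (2 * h) + (if b then h else 0) + 2 * h) ∧
      y ∈ Icc ((m : ℝ) * (2 * h) + (if b then h else 0))
        (m * (2 * h) + (if b then h else 0) + 2 * h) := by
  obtain ⟨n, hn⟩ := exists_int_mul_Icc_of_abs_sub_lt hh hxy
  obtain ⟨m, b, hmb⟩ := Int.exists_mul_two_add_ite_eq n h
  exact ⟨m, b, by rwa [hmb]⟩

theorem stmt2_general (d : ℕ) (p q : Fin d → ℝ) (j : ℕ) (hj : 1 ≤ j)
    (h : ‖p - q‖ < 2 ^ (j - 1)) :
    ∃ (m : Fin d → ℤ) (b : Fin d → Bool), p ∈ levelCell d j m b ∧ q ∈ levelCell d j m b := by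
  have hside : (2 : ℝ) ^ j = 2 * 2 ^ (j - 1) := by
    rw [← pow_succ']
    congr 1
    omega
  have hcoord (k : Fin d) : |p k - q k| < 2 ^ (j - 1) :=
    (norm_le_pi_norm (p - q) k).trans_lt h
  choose m b hcell using fun k => exists_shifted_Icc_of_abs_sub_lt (by positivity) (hcoord k)
  refine ⟨m, b, fun k => ?_, fun k => ?_⟩
  · rw [hside]; exact (hcell k).1
  · rw [hside]; exact (hcell k).2

/-- for points `p, q ∈ ℝ^d` and an integer `j ≥ 1`, if `‖p−q‖_∞ < 2^(j-1)`
then some level-`j` cell contains both `p` and `q`.  (The norm on `Fin d → ℝ` is the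
sup-norm.) -/
theorem stmt2 (d : ℕ) (hd : 1 ≤ d) (p q : Fin d → ℝ) (j : ℕ) (hj : 1 ≤ j)
    (h : ‖p - q‖ < 2 ^ (j - 1)) :
    ∃ (m : Fin d → ℤ) (b : Fin d → Bool), p ∈ levelCell d j m b ∧ q ∈ levelCell d j m b :=
  stmt2_general d p q j hj h
end
end

section
/- Let S ⊆ ℝ^d be a nonempty set and j ≥ 1 an integer such that ‖p−q‖_∞ < 2^{j-1} for all p, q ∈ S. Then there exists a level-j cell that contains all of S. -/
/-!
Work one coordinate at a time. A set `T` of reals of diameter at most `H` lies in some interval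
`[n H, n H + 2 H]` with `n ∈ ℤ`: for `n = ⌊inf T / H⌋` one has `n H ≤ inf T ≤ x ≤ inf T + H < n H + 2 H`.
Writing `n = 2 m + r` with `r ∈ {0, 1}` turns this interval, for `H = 2^(j-1)`, into
`[m 2^j + r 2^(j-1), m 2^j + r 2^(j-1) + 2^j]`, a side of a level-`j` cell.
-/
noncomputable section

lemma exists_int_subset_Icc_mul {T : Set ℝ} {H : ℝ} (hH : 0 < H)
    (hT : ∀ x ∈ T, ∀ y ∈ T, |x - y| ≤ H) :
    ∃ n : ℤ, T ⊆ Set.Icc (n * H) (n * H + 2 * H) := by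
  rcases T.eq_empty_or_nonempty with rfl | ⟨x₀, hx₀⟩
  · exact ⟨0, Set.empty_subset _⟩
  have hbdd : BddBelow T :=
    ⟨x₀ - H, fun y hy => by linarith [(abs_le.mp (hT x₀ hx₀ y hy)).2]⟩
  set a := sInf T
  refine ⟨⌊a / H⌋, fun x hx => ⟨?_, ?_⟩⟩
  · calc (⌊a / H⌋ : ℝ) * H ≤ a := (le_div_iff₀ hH).mp (Int.floor_le _)
      _ ≤ x := csInf_le hbdd hx
  · have hxa : x - H ≤ a :=
      le_csInf ⟨x₀, hx₀⟩ fun y hy => by linarith [(abs_le.mp (hT x hx y hy)).2]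
    have ha : a < (⌊a / H⌋ + 1) * H := (div_lt_iff₀ hH).mp (Int.lt_floor_add_one _)
    linarith

lemma ediv_two_mul_two_mul_add_ite (n : ℤ) (x : ℝ) :
    ((n / 2 : ℤ) : ℝ) * (2 * x) + (if n % 2 = 1 then x else 0) = n * x := by
  have hn : ((n : ℤ) : ℝ) = 2 * ((n / 2 : ℤ) : ℝ) + ((n % 2 : ℤ) : ℝ) := by
    exact_mod_cast (Int.mul_ediv_add_emod n 2).symm
  rcases Int.emod_two_eq_zero_or_one n with h | h <;> simp [h, hn] <;> ring

lemma levelCell_ediv_two {d j : ℕ} (hj : 1 ≤ j) (n : Fin d → ℤ) :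
    levelCell d j (fun k => n k / 2) (fun k => decide (n k % 2 = 1)) =
      {p | ∀ k, p k ∈ Set.Icc ((n k : ℝ) * 2 ^ (j - 1)) (n k * 2 ^ (j - 1) + 2 * 2 ^ (j - 1))} := by
  have h2j : (2 : ℝ) ^ j = 2 * 2 ^ (j - 1) := by
    rw [← pow_succ']; congr 1; omega
  ext p
  simp only [levelCell, Set.mem_ofPred_eq, Set.mem_Icc, decide_eq_true_eq, h2j,
    ediv_two_mul_two_mul_add_ite]

theorem stmt3_general (d : ℕ) (S : Set (Fin d → ℝ))
    (j : ℕ) (hj : 1 ≤ j) (h : ∀ p ∈ S, ∀ q ∈ S, ‖p - q‖ < 2 ^ (j - 1)) :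
    ∃ (m : Fin d → ℤ) (b : Fin d → Bool), S ⊆ levelCell d j m b := by
  have hcoord (k : Fin d) : ∀ x ∈ (· k) '' S, ∀ y ∈ (· k) '' S, |x - y| ≤ 2 ^ (j - 1) := by
    rintro _ ⟨p, hp, rfl⟩ _ ⟨q, hq, rfl⟩
    exact (norm_le_pi_norm (p - q) k).trans (h p hp q hq).le
  choose n hn using fun k => exists_int_subset_Icc_mul (by positivity) (hcoord k)
  refine ⟨fun k => n k / 2, fun k => decide (n k % 2 = 1), ?_⟩
  rw [levelCell_ediv_two hj n]
  intro p hp k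
  exact hn k ⟨p, hp, rfl⟩

/-- if `S ⊆ ℝ^d` is nonempty, `j ≥ 1`, and `‖p−q‖_∞ < 2^(j-1)` for all
`p, q ∈ S`, then some level-`j` cell contains all of `S`.  (The norm on `Fin d → ℝ` is
the sup-norm.) -/
theorem stmt3 (d : ℕ) (hd : 1 ≤ d) (S : Set (Fin d → ℝ)) (hS : S.Nonempty)
    (j : ℕ) (hj : 1 ≤ j) (h : ∀ p ∈ S, ∀ q ∈ S, ‖p - q‖ < 2 ^ (j - 1)) :
    ∃ (m : Fin d → ℤ) (b : Fin d → Bool), S ⊆ levelCell d j m b :=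
  stmt3_general d S j hj h
end
end

section
/- Let M be a matching of size i < n between A and B. Then (n − i) · adj*_{ε̄,M} ≤ cost(M_opt) + c0·ε̄·(cost(M_opt) + cost(M)) = (1 + c0·ε̄)·cost(M_opt) + c0·ε̄·cost(M). -/
open scoped Classical

noncomputable section

/-- Points in `d`-dimensional Euclidean space. -/
abbrev Pt (d : ℕ) : Type := EuclideanSpace ℝ (Fin d)

/-- `M` is a matching between `A` and `B`: every edge is a pair in `A × B`, and no point
appears in more than one edge. -/
def IsMatching {d : ℕ} (A B : Finset (Pt d)) (M : Finset (Pt d × Pt d)) : Prop :=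
  (∀ e ∈ M, e.1 ∈ A ∧ e.2 ∈ B) ∧
  (∀ e ∈ M, ∀ e' ∈ M, e.1 = e'.1 → e = e') ∧
  (∀ e ∈ M, ∀ e' ∈ M, e.2 = e'.2 → e = e')

/-- The cost of a matching: the sum of Euclidean lengths of its edges. -/
def matchCost {d : ℕ} (M : Finset (Pt d × Pt d)) : ℝ :=
  ∑ e ∈ M, dist e.1 e.2

/-- A point is free with respect to `M` if it lies in no edge of `M`. -/
def IsFree {d : ℕ} (M : Finset (Pt d × Pt d)) (p : Pt d) : Prop :=
  ∀ e ∈ M, e.1 ≠ p ∧ e.2 ≠ p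

/-- The edge of the complete bipartite graph joining `u` and `v`, oriented as a pair in
`A × B`. -/
def edgeOf {d : ℕ} (A : Finset (Pt d)) (u v : Pt d) : Pt d × Pt d :=
  if u ∈ A then (u, v) else (v, u)

/-- The edges of a path given by its list of vertices. -/
def pathEdges {d : ℕ} (A : Finset (Pt d)) (L : List (Pt d)) : List (Pt d × Pt d) :=
  (L.zip L.tail).map fun uv => edgeOf A uv.1 uv.2

/-- The edges of a cycle given by its list of vertices (including the wrap-around edge). -/
def cycleEdges {d : ℕ} (A : Finset (Pt d)) (L : List (Pt d)) : List (Pt d × Pt d) :=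
  pathEdges A (L ++ L.take 1)

/-- Two consecutive edges alternate: exactly one of them is a matching edge. -/
def AltRel {d : ℕ} (M : Finset (Pt d × Pt d)) (e f : Pt d × Pt d) : Prop :=
  e ∈ M ↔ f ∉ M

/-- An alternating path with respect to `M`: a simple path in the complete bipartite graph
on `A` and `B` whose edges alternate between edges of `M` and edges not in `M`. -/
def IsAltPath {d : ℕ} (A B : Finset (Pt d)) (M : Finset (Pt d × Pt d))
    (L : List (Pt d)) : Prop :=
  2 ≤ L.length ∧ L.Nodup ∧ (∀ p ∈ L, p ∈ A ∪ B) ∧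
  L.Chain' (fun u v => (u ∈ A ∧ v ∈ B) ∨ (u ∈ B ∧ v ∈ A)) ∧
  (pathEdges A L).Chain' (AltRel M)

/-- An augmenting path: an alternating path whose two endpoints are free. -/
def IsAugPath {d : ℕ} (A B : Finset (Pt d)) (M : Finset (Pt d × Pt d))
    (L : List (Pt d)) : Prop :=
  IsAltPath A B M L ∧
  (∀ p, L.head? = some p → IsFree M p) ∧
  (∀ p, L.getLast? = some p → IsFree M p)

/-- An alternating cycle with respect to `M`: a simple cycle in the complete bipartite
graph on `A` and `B` whose edges alternate between edges of `M` and edges not in `M`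
(including around the wrap-around edge). -/
def IsAltCycle {d : ℕ} (A B : Finset (Pt d)) (M : Finset (Pt d × Pt d))
    (L : List (Pt d)) : Prop :=
  4 ≤ L.length ∧ L.Nodup ∧ (∀ p ∈ L, p ∈ A ∪ B) ∧
  (L ++ L.take 1).Chain' (fun u v => (u ∈ A ∧ v ∈ B) ∨ (u ∈ B ∧ v ∈ A)) ∧
  (cycleEdges A L).Chain' (AltRel M) ∧
  (∀ e f, (cycleEdges A L).head? = some e → (cycleEdges A L).getLast? = some f →
    AltRel M f e)

/-- The Euclidean length `‖Π‖` of a path or cycle given by its list of edges. -/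
def eucLen {d : ℕ} (E : List (Pt d × Pt d)) : ℝ :=
  (E.map fun e => dist e.1 e.2).sum

/-- The net cost of an alternating path or cycle given by its list of edges:
non-matching edges count positively, matching edges negatively. -/
def netCost {d : ℕ} (M : Finset (Pt d × Pt d)) (E : List (Pt d × Pt d)) : ℝ :=
  (E.map fun e => if e ∈ M then -(dist e.1 e.2) else dist e.1 e.2).sum

/-- The `θ`-adjusted cost `adj_{θ,M}(Π) = netcost_M(Π) + c0·θ·‖Π‖`. -/
def adjCost {d : ℕ} (c0 θ : ℝ) (M : Finset (Pt d × Pt d))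
    (E : List (Pt d × Pt d)) : ℝ :=
  netCost M E + c0 * θ * eucLen E

/-- The set of `θ`-adjusted costs of augmenting paths with respect to `M`;
`adj*_{θ,M}` is its least element. -/
def adjSet {d : ℕ} (c0 θ : ℝ) (A B : Finset (Pt d)) (M : Finset (Pt d × Pt d)) : Set ℝ :=
  {x | ∃ L : List (Pt d), IsAugPath A B M L ∧ adjCost c0 θ M (pathEdges A L) = x}

/-!
From each of the `n - i` vertices of `A` left free by `M`, follow alternately the edge of
`Mopt` and the edge of `M` at the current vertex. This walk cannot revisit a vertex, and it
stops at a vertex of `B` that is free in `M`, so it is an augmenting path. The paths obtained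
from different free vertices are vertex-disjoint, so their `Mopt`-edges are distinct edges of
`Mopt` and their `M`-edges distinct edges of `M`: their net costs add up to at most
`cost(Mopt)` and their lengths to at most `cost(Mopt) + cost(M)`, while each of the `n - i`
adjusted costs is at least `adj*`.
-/

open Finset

section

variable {d : ℕ} {A B : Finset (Pt d)} {M N P : Finset (Pt d × Pt d)}

theorem IsMatching.mono (h : IsMatching A B N) (hPN : P ⊆ N) : IsMatching A B P :=
  ⟨fun e he => h.1 e (hPN he), fun e he e' he' => h.2.1 e (hPN he) e' (hPN he'),
    fun e he e' he' => h.2.2 e (hPN he) e' (hPN he')⟩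

theorem IsMatching.injOn_fst (h : IsMatching A B N) : Set.InjOn Prod.fst (N : Set (Pt d × Pt d)) :=
  fun e he e' he' => h.2.1 e he e' he'

theorem IsMatching.injOn_snd (h : IsMatching A B N) : Set.InjOn Prod.snd (N : Set (Pt d × Pt d)) :=
  fun e he e' he' => h.2.2 e he e' he'

theorem IsMatching.image_fst_sdiff (h : IsMatching A B N) (hPN : P ⊆ N) :
    (N \ P).image Prod.fst = N.image Prod.fst \ P.image Prod.fst :=
  image_sdiff_of_injOn h.injOn_fst hPN

theorem IsMatching.image_snd_sdiff (h : IsMatching A B N) (hPN : P ⊆ N) :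
    (N \ P).image Prod.snd = N.image Prod.snd \ P.image Prod.snd :=
  image_sdiff_of_injOn h.injOn_snd hPN

theorem IsMatching.fst_notMem_image_erase (h : IsMatching A B N) {e : Pt d × Pt d}
    (he : e ∈ N) : e.1 ∉ (N.erase e).image Prod.fst := fun hmem => by
  obtain ⟨f, hf, hf1⟩ := mem_image.mp hmem
  exact (mem_erase.mp hf).1 (h.2.1 _ (mem_of_mem_erase hf) _ he hf1)

theorem IsMatching.snd_notMem_image_erase (h : IsMatching A B N) {e : Pt d × Pt d}
    (he : e ∈ N) : e.2 ∉ (N.erase e).image Prod.snd := fun hmem => by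
  obtain ⟨f, hf, hf2⟩ := mem_image.mp hmem
  exact (mem_erase.mp hf).1 (h.2.2 _ (mem_of_mem_erase hf) _ he hf2)

theorem IsMatching.image_fst_eq (h : IsMatching A B N) (hcard : N.card = A.card) :
    N.image Prod.fst = A :=
  eq_of_subset_of_card_le (image_subset_iff.mpr fun e he => (h.1 e he).1)
    (by rw [card_image_of_injOn h.injOn_fst, hcard])

theorem IsMatching.image_snd_eq (h : IsMatching A B N) (hcard : N.card = B.card) :
    N.image Prod.snd = B :=
  eq_of_subset_of_card_le (image_subset_iff.mpr fun e he => (h.1 e he).2)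
    (by rw [card_image_of_injOn h.injOn_snd, hcard])

theorem matchCost_nonneg (N : Finset (Pt d × Pt d)) : 0 ≤ matchCost N :=
  sum_nonneg fun _ _ => dist_nonneg

theorem matchCost_insert {e : Pt d × Pt d} (he : e ∉ N) :
    matchCost (insert e N) = dist e.1 e.2 + matchCost N :=
  sum_insert he

theorem isFree_of_forall_fst_ne (hAB : Disjoint A B) (hM : IsMatching A B M) {x : Pt d}
    (hx : x ∈ A) (h : ∀ e ∈ M, e.1 ≠ x) : IsFree M x :=
  fun e he => ⟨h e he, fun h2 => disjoint_left.mp hAB hx (h2 ▸ (hM.1 e he).2)⟩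

theorem netCost_cons (e : Pt d × Pt d) (E : List (Pt d × Pt d)) :
    netCost M (e :: E) = (if e ∈ M then -dist e.1 e.2 else dist e.1 e.2) + netCost M E := by
  simp [netCost]

theorem eucLen_cons (e : Pt d × Pt d) (E : List (Pt d × Pt d)) :
    eucLen (e :: E) = dist e.1 e.2 + eucLen E := by
  simp [eucLen]

theorem pathEdges_alt (hAB : Disjoint A B) {a b a' : Pt d} (ha : a ∈ A) (hb : b ∈ B)
    (l : List (Pt d)) :
    pathEdges A (a :: b :: a' :: l) = (a, b) :: (a', b) :: pathEdges A (a' :: l) := by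
  simp [pathEdges, edgeOf, ha, disjoint_right.mp hAB hb]

theorem IsAltPath.cons_cons (hAB : Disjoint A B) {a b a' : Pt d} {l : List (Pt d)}
    (hL : IsAltPath A B M (a' :: l)) (ha : a ∈ A) (hb : b ∈ B) (ha' : a' ∈ A)
    (haL : a ∉ a' :: l) (hbL : b ∉ a' :: l) (hab : (a, b) ∉ M) (hlink : (a', b) ∈ M)
    (hhead : ∀ e, (pathEdges A (a' :: l)).head? = some e → e ∉ M) :
    IsAltPath A B M (a :: b :: a' :: l) := by
  obtain ⟨-, hnodup, hmem, hbip, halt⟩ := hL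
  refine ⟨by simp, ?_, ?_, ?_, ?_⟩
  · have hne : a ≠ b := fun h => disjoint_left.mp hAB ha (h ▸ hb)
    exact List.nodup_cons.mpr ⟨by simp [hne, haL], List.nodup_cons.mpr ⟨hbL, hnodup⟩⟩
  · simp only [List.mem_cons]
    rintro p (rfl | rfl | hp)
    · exact mem_union_left _ ha
    · exact mem_union_right _ hb
    · exact hmem p (List.mem_cons.mpr hp)
  · exact List.isChain_cons_cons.mpr ⟨Or.inl ⟨ha, hb⟩, List.isChain_cons_cons.mpr
      ⟨Or.inr ⟨hb, ha'⟩, hbip⟩⟩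
  · rw [pathEdges_alt hAB ha hb]
    refine List.isChain_cons_cons.mpr ⟨iff_of_false hab (not_not_intro hlink),
      List.isChain_cons.mpr ⟨fun f hf => iff_of_true hlink (hhead f hf), halt⟩⟩

def edgesAtFst (M N : Finset (Pt d × Pt d)) : Finset (Pt d × Pt d) :=
  M.filter fun e => e.1 ∈ N.image Prod.fst

def edgesAtSnd (M N : Finset (Pt d × Pt d)) : Finset (Pt d × Pt d) :=
  M.filter fun e => e.2 ∈ N.image Prod.snd

/-- `L` is an `M`-alternating path from `a` to an `M`-free vertex, starting with an edge outside
`M`, whose vertices lie on `P`. The cost fields say that its edges are those of `P` (outside `M`)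
and of `edgesAtSnd M P` (in `M`); the closure fields, that every `M`-edge meeting `P`, except
one at `a`, is among the latter. -/
structure IsAltPathFrom (A B : Finset (Pt d)) (M : Finset (Pt d × Pt d)) (a : Pt d)
    (P : Finset (Pt d × Pt d)) (L : List (Pt d)) : Prop where
  isAltPath : IsAltPath A B M L
  head_eq : L.head? = some a
  head_edge_notMem : ∀ e, (pathEdges A L).head? = some e → e ∉ M
  last_isFree : ∀ p, L.getLast? = some p → IsFree M p
  exists_edge_of_mem : ∀ p ∈ L, ∃ e ∈ P, e.1 = p ∨ e.2 = p
  start_mem : a ∈ P.image Prod.fst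
  fst_mem_of_snd_mem : ∀ e ∈ M, e.2 ∈ P.image Prod.snd → e.1 ∈ P.image Prod.fst
  snd_mem_of_fst_mem :
    ∀ e ∈ M, e.1 ∈ P.image Prod.fst → e.1 = a ∨ e.2 ∈ P.image Prod.snd
  card_edgesAtSnd : (edgesAtSnd M P).card + 1 = P.card
  netCost_eq : netCost M (pathEdges A L) = matchCost P - matchCost (edgesAtSnd M P)
  eucLen_eq : eucLen (pathEdges A L) = matchCost P + matchCost (edgesAtSnd M P)

theorem isAltPathFrom_pair (hAB : Disjoint A B) {a b : Pt d} (ha : a ∈ A) (hb : b ∈ B)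
    (hfree : IsFree M b) : IsAltPathFrom A B M a {(a, b)} [a, b] := by
  have hab : (a, b) ∉ M := fun h => (hfree _ h).2 rfl
  have hedges : pathEdges A [a, b] = [(a, b)] := by simp [pathEdges, edgeOf, ha]
  have hempty : edgesAtSnd M {(a, b)} = ∅ :=
    filter_eq_empty_iff.mpr fun e he h => (hfree e he).2 (by simpa using h)
  refine ⟨⟨le_rfl, ?_, ?_, ?_, ?_⟩, rfl, ?_, ?_, ?_, by simp, ?_, ?_, ?_, ?_, ?_⟩
  · simpa using fun h : a = b => disjoint_left.mp hAB ha (h ▸ hb)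
  · simp [ha, hb]
  · exact List.isChain_pair.mpr (Or.inl ⟨ha, hb⟩)
  · rw [hedges]; exact List.isChain_singleton _
  · simpa [hedges] using hab
  · simpa using hfree
  · simp
  · intro e he h
    exact absurd (by simpa using h) (hfree e he).2
  · intro e _ h
    exact Or.inl (by simpa using h)
  · simp [hempty]
  · simp [hedges, hempty, netCost, matchCost, hab]
  · simp [hedges, hempty, eucLen, matchCost]

theorem edgesAtSnd_insert (hM : IsMatching A B M) {a a' b : Pt d} (hlink : (a', b) ∈ M) :
    edgesAtSnd M (insert (a, b) P) = insert (a', b) (edgesAtSnd M P) := by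
  ext e
  simp only [edgesAtSnd, mem_filter, image_insert, mem_insert]
  constructor
  · rintro ⟨he, he2 | he2⟩
    · exact Or.inl (hM.2.2 e he _ hlink he2)
    · exact Or.inr ⟨he, he2⟩
  · rintro (rfl | ⟨he, he2⟩)
    · exact ⟨hlink, Or.inl rfl⟩
    · exact ⟨he, Or.inr he2⟩

theorem IsAltPathFrom.exists_eq_cons {a : Pt d} {L : List (Pt d)}
    (h : IsAltPathFrom A B M a P L) : ∃ l, L = a :: l := by
  have hhead := h.head_eq
  cases L with
  | nil => simp at hhead
  | cons x l => exact ⟨l, by simpa using hhead⟩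

theorem IsAltPathFrom.notMem_of_fst (hAB : Disjoint A B) {a x : Pt d} {L : List (Pt d)}
    (h : IsAltPathFrom A B M a P L) (hP : ∀ e ∈ P, e.1 ∈ A ∧ e.2 ∈ B) (hx : x ∈ A)
    (hxP : x ∉ P.image Prod.fst) : x ∉ L := fun hxL => by
  obtain ⟨e, he, he1 | he2⟩ := h.exists_edge_of_mem x hxL
  · exact hxP (he1 ▸ mem_image_of_mem _ he)
  · exact disjoint_left.mp hAB hx (he2 ▸ (hP e he).2)

theorem IsAltPathFrom.notMem_of_snd (hAB : Disjoint A B) {a x : Pt d} {L : List (Pt d)}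
    (h : IsAltPathFrom A B M a P L) (hP : ∀ e ∈ P, e.1 ∈ A ∧ e.2 ∈ B) (hx : x ∈ B)
    (hxP : x ∉ P.image Prod.snd) : x ∉ L := fun hxL => by
  obtain ⟨e, he, he1 | he2⟩ := h.exists_edge_of_mem x hxL
  · exact disjoint_left.mp hAB (he1 ▸ (hP e he).1) hx
  · exact hxP (he2 ▸ mem_image_of_mem _ he)

theorem IsAltPathFrom.cons (hAB : Disjoint A B) (hM : IsMatching A B M) {a a' b : Pt d}
    {L : List (Pt d)} (h : IsAltPathFrom A B M a' P L)
    (hP : ∀ e ∈ P, e.1 ∈ A ∧ e.2 ∈ B) (ha : a ∈ A) (hb : b ∈ B)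
    (haP : a ∉ P.image Prod.fst) (hbP : b ∉ P.image Prod.snd) (hlink : (a', b) ∈ M) :
    IsAltPathFrom A B M a (insert (a, b) P) (a :: b :: L) := by
  obtain ⟨l, rfl⟩ := h.exists_eq_cons
  have hlink_eq : ∀ e ∈ M, e.1 = a' ∨ e.2 = b → e = (a', b) := fun e he he' =>
    he'.elim (hM.2.1 e he _ hlink) (hM.2.2 e he _ hlink)
  have hab : (a, b) ∉ M := fun hab => by
    cases hlink_eq _ hab (Or.inr rfl)
    exact haP h.start_mem
  have habP : (a, b) ∉ P := fun habP => haP (mem_image_of_mem _ habP)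
  have hlinkQ : (a', b) ∉ edgesAtSnd M P := fun hQ => hbP (mem_filter.mp hQ).2
  have hQ : edgesAtSnd M (insert (a, b) P) = insert (a', b) (edgesAtSnd M P) :=
    edgesAtSnd_insert hM hlink
  have hedges := pathEdges_alt hAB ha hb (a' := a') l
  refine ⟨h.isAltPath.cons_cons hAB ha hb (hM.1 _ hlink).1 (h.notMem_of_fst hAB hP ha haP)
      (h.notMem_of_snd hAB hP hb hbP) hab hlink h.head_edge_notMem, rfl, ?_, ?_, ?_, by simp, ?_, ?_, ?_, ?_, ?_⟩
  · simpa [hedges] using hab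
  · simpa only [List.getLast?_cons_cons] using h.last_isFree
  · simp only [List.mem_cons, mem_insert]
    rintro p (rfl | rfl | hp)
    · exact ⟨(p, b), Or.inl rfl, Or.inl rfl⟩
    · exact ⟨(a, p), Or.inl rfl, Or.inr rfl⟩
    · obtain ⟨e, he, he'⟩ := h.exists_edge_of_mem p (List.mem_cons.mpr hp)
      exact ⟨e, Or.inr he, he'⟩
  · simp only [image_insert, mem_insert]
    rintro e he (he2 | he2)
    · rw [hlink_eq e he (Or.inr he2)]
      exact Or.inr h.start_mem
    · exact Or.inr (h.fst_mem_of_snd_mem e he he2)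
  · simp only [image_insert, mem_insert]
    rintro e he (he1 | he1)
    · exact Or.inl he1
    · rcases h.snd_mem_of_fst_mem e he he1 with he1 | he2
      · rw [hlink_eq e he (Or.inl he1)]
        exact Or.inr (Or.inl rfl)
      · exact Or.inr (Or.inr he2)
  · rw [hQ, card_insert_of_notMem hlinkQ, card_insert_of_notMem habP, ← h.card_edgesAtSnd]
  · rw [hedges, netCost_cons, netCost_cons, if_neg hab, if_pos hlink, h.netCost_eq, hQ,
      matchCost_insert habP, matchCost_insert hlinkQ]
    ring
  · rw [hedges, eucLen_cons, eucLen_cons, h.eucLen_eq, hQ, matchCost_insert habP,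
      matchCost_insert hlinkQ]
    ring

/-- Follow the `Mo`-edge at `a`, then the `M`-edge at its other end, and so on; erasing each
used `Mo`-edge makes the walk terminate, and it can only stop at an `M`-free vertex. -/
theorem exists_isAltPathFrom (hAB : Disjoint A B) (hM : IsMatching A B M)
    (Mo : Finset (Pt d × Pt d)) (hMo : IsMatching A B Mo)
    (hclosed : ∀ e ∈ M, e.2 ∈ Mo.image Prod.snd → e.1 ∈ Mo.image Prod.fst) {a b : Pt d}
    (hab : (a, b) ∈ Mo) (hstart : ∀ e ∈ M, e.1 = a → e.2 ∉ Mo.image Prod.snd) :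
    ∃ P ⊆ Mo, ∃ L, IsAltPathFrom A B M a P L := by
  induction Mo using Finset.strongInduction generalizing a b with
  | H Mo ih =>
  obtain ⟨ha, hb⟩ := hMo.1 _ hab
  by_cases hfree : IsFree M b
  · exact ⟨{(a, b)}, singleton_subset_iff.mpr hab, _, isAltPathFrom_pair hAB ha hb hfree⟩
  obtain ⟨a', hlink⟩ : ∃ a', (a', b) ∈ M := by
    simp only [IsFree, not_forall, not_and_or, not_not] at hfree
    obtain ⟨e, he, h1 | h2⟩ := hfree
    · exact absurd (h1 ▸ (hM.1 e he).1) (disjoint_right.mp hAB hb)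
    · exact ⟨e.1, h2 ▸ he⟩
  obtain ⟨b', hab'⟩ : ∃ b', (a', b') ∈ Mo := by
    obtain ⟨f, hf, hf1⟩ := mem_image.mp (hclosed _ hlink (mem_image.mpr ⟨_, hab, rfl⟩))
    exact ⟨f.2, by rwa [← show f.1 = a' from hf1]⟩
  have hsub : Mo.erase (a, b) ⊆ Mo := erase_subset _ _
  have haMo' : a ∉ (Mo.erase (a, b)).image Prod.fst := hMo.fst_notMem_image_erase hab
  have hbMo' : b ∉ (Mo.erase (a, b)).image Prod.snd := hMo.snd_notMem_image_erase hab
  have hclosed' : ∀ e ∈ M, e.2 ∈ (Mo.erase (a, b)).image Prod.snd →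
      e.1 ∈ (Mo.erase (a, b)).image Prod.fst := by
    intro e he he2
    have he2Mo := image_subset_image hsub he2
    obtain ⟨g, hg, hg1⟩ := mem_image.mp (hclosed e he he2Mo)
    refine mem_image.mpr ⟨g, mem_erase.mpr ⟨?_, hg⟩, hg1⟩
    rintro rfl
    exact hstart e he hg1.symm he2Mo
  have hstart' : ∀ e ∈ M, e.1 = a' → e.2 ∉ (Mo.erase (a, b)).image Prod.snd := by
    intro e he he1
    rw [hM.2.1 e he _ hlink he1]
    exact hbMo'
  have hab'' : (a', b') ∈ Mo.erase (a, b) := by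
    refine mem_erase.mpr ⟨fun h => hstart _ hlink ?_ (mem_image.mpr ⟨_, hab, rfl⟩), hab'⟩
    exact congrArg Prod.fst h
  obtain ⟨P, hP, L, hL⟩ := ih _ (erase_ssubset hab) (hMo.mono hsub) hclosed' hab'' hstart'
  refine ⟨insert (a, b) P, insert_subset hab (hP.trans hsub), _,
    hL.cons hAB hM (fun e he => hMo.1 e (hsub (hP he))) ha hb
      (fun h => haMo' (image_subset_image hP h)) (fun h => hbMo' (image_subset_image hP h)) hlink⟩

theorem IsAltPathFrom.isAugPath {a : Pt d} {L : List (Pt d)}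
    (h : IsAltPathFrom A B M a P L) (ha : IsFree M a) : IsAugPath A B M L :=
  ⟨h.isAltPath, fun p hp => by rw [h.head_eq, Option.some_inj] at hp; exact hp ▸ ha,
    h.last_isFree⟩

theorem IsAltPathFrom.fst_mem_iff {a : Pt d} {L : List (Pt d)}
    (h : IsAltPathFrom A B M a P L) (ha : IsFree M a) :
    ∀ e ∈ M, e.1 ∈ P.image Prod.fst ↔ e.2 ∈ P.image Prod.snd := fun e he =>
  ⟨fun he1 => (h.snd_mem_of_fst_mem e he he1).resolve_left (ha e he).1,
    h.fst_mem_of_snd_mem e he⟩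

theorem card_edgesAtFst_of_forall_not_isFree (hAB : Disjoint A B)
    (hM : IsMatching A B M) (hN : IsMatching A B N)
    (hmatched : ∀ x ∈ N.image Prod.fst, ¬IsFree M x) : (edgesAtFst M N).card = N.card := by
  rw [edgesAtFst, ← card_image_of_injOn (hM.mono (filter_subset _ _)).injOn_fst,
    ← card_image_of_injOn hN.injOn_fst]
  refine congrArg card (Subset.antisymm (image_subset_iff.mpr fun e he => (mem_filter.mp he).2)
    fun x hx => ?_)
  have hxA : x ∈ A := by
    obtain ⟨e, he, rfl⟩ := mem_image.mp hx
    exact (hN.1 e he).1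
  by_contra hx'
  refine hmatched x hx (isFree_of_forall_fst_ne hAB hM hxA fun e he he1 => hx' ?_)
  exact mem_image.mpr ⟨e, mem_filter.mpr ⟨he, he1 ▸ hx⟩, he1⟩

theorem IsAltPathFrom.closed_sdiff {a : Pt d} {L : List (Pt d)}
    (h : IsAltPathFrom A B M a P L) (ha : IsFree M a) (hN : IsMatching A B N) (hPN : P ⊆ N)
    (hclosed : ∀ e ∈ M, e.1 ∈ N.image Prod.fst ↔ e.2 ∈ N.image Prod.snd) :
    ∀ e ∈ M, e.1 ∈ (N \ P).image Prod.fst ↔ e.2 ∈ (N \ P).image Prod.snd := fun e he => by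
  rw [hN.image_fst_sdiff hPN, hN.image_snd_sdiff hPN, mem_sdiff, mem_sdiff, hclosed e he,
    h.fst_mem_iff ha e he]

theorem IsAltPathFrom.filter_edgesAtFst {a : Pt d} {L : List (Pt d)}
    (h : IsAltPathFrom A B M a P L) (ha : IsFree M a) (hN : IsMatching A B N) (hPN : P ⊆ N) :
    (edgesAtFst M N).filter (fun e => e.2 ∈ P.image Prod.snd) = edgesAtSnd M P ∧
      (edgesAtFst M N).filter (fun e => e.2 ∉ P.image Prod.snd) = edgesAtFst M (N \ P) := by
  refine ⟨?_, ?_⟩ <;> rw [edgesAtFst, filter_filter] <;> refine filter_congr fun e he => ?_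
  · exact ⟨And.right, fun he2 =>
      ⟨image_subset_image hPN ((h.fst_mem_iff ha e he).mpr he2), he2⟩⟩
  · rw [hN.image_fst_sdiff hPN, mem_sdiff, h.fst_mem_iff ha e he]

theorem exists_augPaths (hAB : Disjoint A B) (hM : IsMatching A B M)
    (Mo : Finset (Pt d × Pt d)) (hMo : IsMatching A B Mo)
    (hclosed : ∀ e ∈ M, e.1 ∈ Mo.image Prod.fst ↔ e.2 ∈ Mo.image Prod.snd) :
    ∃ Ls : List (List (Pt d)),
      Ls.length + (edgesAtFst M Mo).card = Mo.card ∧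
      (∀ L ∈ Ls, IsAugPath A B M L) ∧
      (Ls.map fun L => netCost M (pathEdges A L)).sum ≤ matchCost Mo ∧
      (Ls.map fun L => eucLen (pathEdges A L)).sum ≤
        matchCost Mo + matchCost (edgesAtFst M Mo) := by
  induction Mo using Finset.strongInduction with
  | H Mo ih =>
  by_cases hmatched : ∀ x ∈ Mo.image Prod.fst, ¬IsFree M x
  · refine ⟨[], ?_, by simp, by simpa using matchCost_nonneg Mo, ?_⟩
    · simpa using card_edgesAtFst_of_forall_not_isFree hAB hM hMo hmatched
    · simpa using add_nonneg (matchCost_nonneg _) (matchCost_nonneg _)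
  obtain ⟨a, ha, hafree⟩ : ∃ a ∈ Mo.image Prod.fst, IsFree M a := by
    simpa only [not_forall, not_not, exists_prop] using hmatched
  obtain ⟨b, hab⟩ : ∃ b, (a, b) ∈ Mo := by
    obtain ⟨f, hf, hf1⟩ := mem_image.mp ha
    exact ⟨f.2, by rwa [← hf1]⟩
  obtain ⟨P, hPMo, L, hL⟩ := exists_isAltPathFrom hAB hM Mo hMo (fun e he => (hclosed e he).mpr)
    hab fun e he he1 => absurd he1 (hafree e he).1
  have hPne : P.Nonempty := by
    obtain ⟨f, hf, -⟩ := mem_image.mp hL.start_mem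
    exact ⟨f, hf⟩
  obtain ⟨Ls, hlen, haug, hnet, heuc⟩ := ih (Mo \ P) (sdiff_ssubset hPMo hPne)
    (hMo.mono sdiff_subset) (hL.closed_sdiff hafree hMo hPMo hclosed)
  obtain ⟨hin, hout⟩ := hL.filter_edgesAtFst hafree hMo hPMo
  have hcard := card_filter_add_card_filter_not (s := edgesAtFst M Mo)
    fun e => e.2 ∈ P.image Prod.snd
  have hcost : matchCost (edgesAtSnd M P) + matchCost (edgesAtFst M (Mo \ P)) =
      matchCost (edgesAtFst M Mo) := by
    rw [← hin, ← hout]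
    exact sum_filter_add_sum_filter_not _ _ _
  have hMocost : matchCost (Mo \ P) + matchCost P = matchCost Mo := sum_sdiff hPMo
  refine ⟨L :: Ls, ?_, ?_, ?_, ?_⟩
  · rw [hin, hout] at hcard
    have := card_sdiff_add_card_eq_card hPMo
    have := hL.card_edgesAtSnd
    simp only [List.length_cons]
    omega
  · simp only [List.mem_cons]
    rintro L' (rfl | hL')
    · exact hL.isAugPath hafree
    · exact haug L' hL'
  · rw [List.map_cons, List.sum_cons, hL.netCost_eq]
    linarith [matchCost_nonneg (edgesAtSnd M P)]
  · rw [List.map_cons, List.sum_cons, hL.eucLen_eq]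
    linarith

end

theorem length_mul_le_sum_map {α : Type*} (l : List α) (f : α → ℝ) {c : ℝ}
    (h : ∀ x ∈ l, c ≤ f x) : l.length * c ≤ (l.map f).sum := by
  simpa [nsmul_eq_mul] using List.card_nsmul_le_sum (l.map f) c (by simpa using h)

theorem stmt8_general (d n i : ℕ) (A B : Finset (Pt d)) (hAB : Disjoint A B)
    (hA : A.card = n) (hB : B.card = n)
    (c0 εu : ℝ) (hc0 : 0 < c0) (hεu : 0 < εu)
    (M : Finset (Pt d × Pt d)) (hM : IsMatching A B M)
    (hMcard : M.card = i)
    (Mopt : Finset (Pt d × Pt d)) (hMopt : IsMatching A B Mopt) (hMoptcard : Mopt.card = n)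
    (astar : ℝ) (hastar : IsLeast (adjSet c0 εu A B M) astar) :
    ((n : ℝ) - (i : ℝ)) * astar ≤
        matchCost Mopt + c0 * εu * (matchCost Mopt + matchCost M) ∧
      matchCost Mopt + c0 * εu * (matchCost Mopt + matchCost M) =
        (1 + c0 * εu) * matchCost Mopt + c0 * εu * matchCost M := by
  have hfst : Mopt.image Prod.fst = A := hMopt.image_fst_eq (hMoptcard.trans hA.symm)
  have hsnd : Mopt.image Prod.snd = B := hMopt.image_snd_eq (hMoptcard.trans hB.symm)
  have hMA : edgesAtFst M Mopt = M := by
    rw [edgesAtFst, hfst]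
    exact filter_true_of_mem fun e he => (hM.1 e he).1
  obtain ⟨Ls, hlen, haug, hnet, heuc⟩ := exists_augPaths hAB hM Mopt hMopt fun e he => by
    rw [hfst, hsnd]
    exact iff_of_true (hM.1 e he).1 (hM.1 e he).2
  rw [hMA, hMcard, hMoptcard] at hlen
  rw [hMA] at heuc
  refine ⟨?_, by ring⟩
  calc ((n : ℝ) - i) * astar = Ls.length * astar := by rw [← hlen]; push_cast; ring
    _ ≤ (Ls.map fun L => adjCost c0 εu M (pathEdges A L)).sum :=
      length_mul_le_sum_map _ _ fun L hL => hastar.2 ⟨L, haug L hL, rfl⟩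
    _ = (Ls.map fun L => netCost M (pathEdges A L)).sum +
          c0 * εu * (Ls.map fun L => eucLen (pathEdges A L)).sum := by
      simp only [adjCost, List.sum_map_add, List.sum_map_mul_left]
    _ ≤ _ := by
      have := mul_pos hc0 hεu
      gcongr

/-- if `M` is a matching of size `i < n`, `Mopt` is a minimum-cost perfect
matching, and `astar = adj*_{ε̄,M}` is the minimum `ε̄`-adjusted cost of an augmenting path
with respect to `M`, then
`(n − i)·adj*_{ε̄,M} ≤ cost(Mopt) + c0·ε̄·(cost(Mopt) + cost(M))
                    = (1 + c0·ε̄)·cost(Mopt) + c0·ε̄·cost(M)`. -/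
theorem stmt8 (d n i : ℕ) (hn : 1 ≤ n) (A B : Finset (Pt d)) (hAB : Disjoint A B)
    (hA : A.card = n) (hB : B.card = n)
    (c0 εu : ℝ) (hc0 : 0 < c0) (hεu : 0 < εu)
    (M : Finset (Pt d × Pt d)) (hM : IsMatching A B M)
    (hMcard : M.card = i) (hin : i < n)
    (Mopt : Finset (Pt d × Pt d)) (hMopt : IsMatching A B Mopt) (hMoptcard : Mopt.card = n)
    (hMoptmin : ∀ M'' : Finset (Pt d × Pt d),
      IsMatching A B M'' → M''.card = n → matchCost Mopt ≤ matchCost M'')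
    (astar : ℝ) (hastar : IsLeast (adjSet c0 εu A B M) astar) :
    ((n : ℝ) - (i : ℝ)) * astar ≤
        matchCost Mopt + c0 * εu * (matchCost Mopt + matchCost M) ∧
      matchCost Mopt + c0 * εu * (matchCost Mopt + matchCost M) =
        (1 + c0 * εu) * matchCost Mopt + c0 * εu * matchCost M :=
  stmt8_general d n i A B hAB hA hB c0 εu hc0 hεu M hM hMcard Mopt hMopt hMoptcard astar hastar
end
end

section
/- Let 0 < ε ≤ 1, let ε̄ = ε/c1 with c1 ≥ 8·c0, and let 0 < ε̲ ≤ ε̄. Suppose cost(M_opt) ≤ 9·√d·n/ε. Let M be a matching of size i < n between A and B such that cost(M) ≤ (1 + ε/2)·cost(M_opt) and every alternating cycle Γ with respect to M satisfies adj_{ε̄,M}(Γ) ≥ 0. Then every augmenting path Π with respect to M with adj_{ε̲,M}(Π) ≤ adj*_{ε̄,M} satisfies ‖Π‖ ≤ 27·√d·n/ε. -/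
open scoped Classical

noncomputable section

/-!
Link the `Mopt`-edges by `IsNext`: after `e` comes the `Mopt`-edge whose `A`-end is matched
by `M` to the `B`-end of `e`. This partial injection on `Mopt` splits `M ∪ Mopt` into
components: paths from an `M`-free point of `A` to an `M`-free point of `B`, which are
augmenting paths, and cycles, which are alternating cycles or edges common to `M` and `Mopt`.
Give the `Mopt`-edge `e` the weight `(1 + t)‖e‖ - (1 - t)‖f‖`, where `f` is the `M`-edge at
the `B`-end of `e` and `t = c0·ε̄`. The `t`-adjusted cost of a component is the sum of the
weights of its `Mopt`-edges, and all the weights add up to `(1 + t)·cost(Mopt) - (1 - t)·cost(M)`.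
As `i < n`, there is at least one path, and its adjusted cost is at least `adj*`. Cycles have
nonnegative adjusted cost, so if `adj* ≥ 0` then `adj* ≤ (1 + t)·cost(Mopt) - (1 - t)·cost(M)`.
On the other hand, `‖Π‖ = netcost(Π) + 2·cost(Π ∩ M) ≤ adj_ε̲(Π) + 2·cost(M) ≤ adj* + 2·cost(M)`.
Whether or not `adj* ≤ 0`, this is at most `3·cost(Mopt)`, because `t ≤ ε/8` and `ε ≤ 1`.
-/

open Finset

section PartialInjection

variable {α : Type*} {R : α → α → Prop}

def IsRelClosed (R : α → α → Prop) (S : Finset α) : Prop :=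
  ∀ ⦃x y⦄, R x y → (x ∈ S ↔ y ∈ S)

structure IsRelPath (R : α → α → Prop) (x₀ z : α) (l : List α) : Prop where
  head : l.head? = some x₀
  last : l.getLast? = some z
  nodup : l.Nodup
  chain : l.IsChain R

theorem IsRelPath.head_mem {x₀ z : α} {l : List α} (hl : IsRelPath R x₀ z l) : x₀ ∈ l :=
  List.mem_of_mem_head? hl.head

theorem IsRelPath.last_mem {x₀ z : α} {l : List α} (hl : IsRelPath R x₀ z l) : z ∈ l :=
  List.mem_of_mem_getLast? hl.last

theorem IsRelPath.eq_singleton {x : α} {l : List α} (hl : IsRelPath R x x l) : l = [x] := by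
  obtain ⟨head, last, nodup, -⟩ := hl
  match l, head, last with
  | [_], rfl, _ => rfl
  | _ :: y :: l, rfl, last =>
    rw [List.getLast?_cons_cons] at last
    exact absurd (List.mem_of_mem_getLast? last) (List.nodup_cons.1 nodup).1

theorem IsRelPath.two_le_length {x₀ z : α} {l : List α} (hl : IsRelPath R x₀ z l)
    (hne : x₀ ≠ z) : 2 ≤ l.length := by
  obtain ⟨head, last, -, -⟩ := hl
  match l, head, last with
  | [_], rfl, last => exact absurd (Option.some_inj.1 last) hne
  | _ :: _ :: _, _, _ => simp

theorem List.IsChain.forall_not_rel_self (hR : Relator.RightUnique R) {l : List α}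
    (hl : l.IsChain R) (hnd : l.Nodup) (hlast : ∀ z ∈ l.getLast?, ¬R z z) :
    ∀ x ∈ l, ¬R x x := by
  induction l with
  | nil => simp
  | cons x l ih =>
    cases l with
    | nil => simpa using hlast
    | cons y l =>
      have hxy := (List.isChain_cons_cons.1 hl).1
      have hx : ¬R x x := fun hxx => (List.nodup_cons.1 hnd).1 (hR hxx hxy ▸ by simp)
      simpa [hx] using ih (List.isChain_cons_cons.1 hl).2 (List.nodup_cons.1 hnd).2
        (by simpa using hlast)

def relSucc (R : α → α → Prop) (x : α) : α :=
  if h : ∃ y, R x y then h.choose else x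

theorem rel_relSucc {x : α} (h : ∃ y, R x y) : R x (relSucc R x) := by
  rw [relSucc, dif_pos h]
  exact h.choose_spec

theorem relSucc_eq (hR : Relator.RightUnique R) {x y : α} (h : R x y) : relSucc R x = y :=
  hR (rel_relSucc ⟨y, h⟩) h

theorem iterate_relSucc_mem {S : Finset α} (hS : IsRelClosed R S) {x : α} (hx : x ∈ S) (k : ℕ) :
    (relSucc R)^[k] x ∈ S := by
  induction k with
  | zero => exact hx
  | succ k ih =>
    rw [Function.iterate_succ_apply']
    by_cases h : ∃ y, R ((relSucc R)^[k] x) y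
    · exact (hS (rel_relSucc h)).1 ih
    · rwa [relSucc, dif_neg h]

theorem iterate_relSucc_eq_self (hR : Relator.LeftUnique R) {x₀ : α} {i p : ℕ}
    (hstep : ∀ k < i + p, R ((relSucc R)^[k] x₀) ((relSucc R)^[k + 1] x₀))
    (h : (relSucc R)^[i] x₀ = (relSucc R)^[i + p] x₀) : (relSucc R)^[p] x₀ = x₀ := by
  induction i with
  | zero => simpa using h.symm
  | succ i ih =>
    refine ih (fun k hk => hstep k (by omega)) (hR (hstep i (by omega)) ?_)
    rw [h, show i + 1 + p = i + p + 1 by omega]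
    exact hstep (i + p) (by omega)

theorem rel_iterate_relSucc_of_eq (hR : Relator.LeftUnique R) {x₀ : α} {i p : ℕ}
    (hstep : ∀ k < i + (p + 1), ∃ y, R ((relSucc R)^[k] x₀) y)
    (h : (relSucc R)^[i] x₀ = (relSucc R)^[i + (p + 1)] x₀) : R ((relSucc R)^[p] x₀) x₀ := by
  have hstep' : ∀ k < i + (p + 1), R ((relSucc R)^[k] x₀) ((relSucc R)^[k + 1] x₀) :=
    fun k hk => by rw [Function.iterate_succ_apply']; exact rel_relSucc (hstep k hk)
  have hp := hstep' p (by omega)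
  rwa [iterate_relSucc_eq_self hR hstep' h] at hp

theorem exists_iterate_relSucc_stop (hR : Relator.LeftUnique R) {S : Finset α}
    (hS : IsRelClosed R S) {x₀ : α} (hx₀ : x₀ ∈ S) :
    ∃ k, (∀ y, ¬R ((relSucc R)^[k] x₀) y) ∨ R ((relSucc R)^[k] x₀) x₀ := by
  by_contra! hnone
  obtain ⟨i, -, j, -, hij, heq⟩ := exists_ne_map_eq_of_card_lt_of_maps_to
    (s := range (S.card + 1)) (t := S) (f := fun k => (relSucc R)^[k] x₀) (by simp)
    (fun k _ => iterate_relSucc_mem hS hx₀ k)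
  wlog hlt : i < j generalizing i j
  · exact this j i hij.symm heq.symm (by omega)
  obtain ⟨p, rfl⟩ : ∃ p, j = i + (p + 1) := ⟨j - i - 1, by omega⟩
  exact (hnone p).2 (rel_iterate_relSucc_of_eq hR (fun k _ => (hnone k).1) heq)

theorem exists_relPath_orbit (hR : Relator.BiUnique R) {S : Finset α} (hS : IsRelClosed R S)
    {x₀ : α} (hx₀ : x₀ ∈ S) :
    ∃ z l, IsRelPath R x₀ z l ∧ (∀ x ∈ l, x ∈ S) ∧ ((∀ y, ¬R z y) ∨ R z x₀) ∧
      ∀ ⦃x y⦄, R x y → y ≠ x₀ → (x ∈ l ↔ y ∈ l) := by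
  classical
  set f := relSucc R
  have hex := exists_iterate_relSucc_stop hR.1 hS hx₀
  set m := Nat.find hex
  have hmin : ∀ k < m, (∃ y, R (f^[k] x₀) y) ∧ ¬R (f^[k] x₀) x₀ := fun k hk => by
    simpa [not_or] using Nat.find_min hex hk
  have hlt : ∀ k < m, R (f^[k] x₀) (f^[k + 1] x₀) := fun k hk => by
    rw [Function.iterate_succ_apply']
    exact rel_relSucc (hmin k hk).1
  have hmem : ∀ {x}, x ∈ (List.range (m + 1)).map (f^[·] x₀) ↔ ∃ k ≤ m, f^[k] x₀ = x := by
    intro x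
    simp only [List.mem_map, List.mem_range, Nat.lt_succ_iff]
  refine ⟨f^[m] x₀, (List.range (m + 1)).map (f^[·] x₀), ⟨?_, ?_, ?_, ?_⟩,
    fun x hx => ?_, Nat.find_spec hex, fun x y hxy hy => ⟨fun hx => ?_, fun hy' => ?_⟩⟩
  · simp [List.range_succ_eq_map]
  · simp [List.range_succ]
  · refine List.Nodup.map_on (fun i hi j hj heq => ?_) List.nodup_range
    rw [List.mem_range] at hi hj
    wlog hij : i < j generalizing i j
    · by_contra hne
      exact hne (this j hj i hi heq.symm (by omega)).symm
    obtain ⟨p, rfl⟩ : ∃ p, j = i + (p + 1) := ⟨j - i - 1, by omega⟩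
    exact absurd (rel_iterate_relSucc_of_eq hR.1 (fun k hk => (hmin k (by omega)).1) heq)
      (hmin p (by omega)).2
  · rw [List.isChain_map]
    exact (List.isChain_range_succ _ m).2 hlt
  · obtain ⟨k, -, rfl⟩ := hmem.1 hx
    exact iterate_relSucc_mem hS hx₀ k
  · obtain ⟨k, hk, rfl⟩ := hmem.1 hx
    rcases hk.lt_or_eq with hk | rfl
    · exact hmem.2 ⟨k + 1, hk, hR.2 (hlt k hk) hxy⟩
    · rcases Nat.find_spec hex with hstop | hback
      · exact absurd hxy (hstop y)
      · exact absurd (hR.2 hxy hback) hy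
  · obtain ⟨k, hk, rfl⟩ := hmem.1 hy'
    obtain ⟨k, rfl⟩ : ∃ k', k = k' + 1 :=
      Nat.exists_eq_succ_of_ne_zero (by rintro rfl; exact hy rfl)
    exact hmem.2 ⟨k, by omega, hR.1 (hlt k (by omega)) hxy⟩

theorem forall_exists_rel_of_forall_exists_rel (hR : Relator.RightUnique R) {S : Finset α}
    (hS : IsRelClosed R S) (hpred : ∀ y ∈ S, ∃ x, R x y) : ∀ x ∈ S, ∃ y, R x y := by
  classical
  have hsurj : Set.SurjOn (relSucc R) (S.filter fun x => ∃ y, R x y) S := by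
    intro y hy
    obtain ⟨x, hxy⟩ := hpred y hy
    exact ⟨x, mem_filter.2 ⟨(hS hxy).2 hy, y, hxy⟩, relSucc_eq hR hxy⟩
  have hfull := eq_of_subset_of_card_le (filter_subset _ S) (card_le_card_of_surjOn _ hsurj)
  intro x hx
  rw [← hfull] at hx
  exact (mem_filter.1 hx).2

variable [DecidableEq α]

theorem IsRelClosed.sdiff {S T : Finset α} (hS : IsRelClosed R S) (hT : IsRelClosed R T) :
    IsRelClosed R (S \ T) := by
  intro x y h
  simp only [mem_sdiff, hS h, hT h]

theorem exists_relPath_of_forall_not_rel (hR : Relator.BiUnique R) {S : Finset α}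
    (hS : IsRelClosed R S) {x₀ : α} (hx₀ : x₀ ∈ S) (hfree : ∀ x, ¬R x x₀) :
    ∃ z l, IsRelPath R x₀ z l ∧ (∀ x ∈ l, x ∈ S) ∧ (∀ y, ¬R z y) ∧
      IsRelClosed R l.toFinset := by
  obtain ⟨z, l, hl, hlS, hz, hcl⟩ := exists_relPath_orbit hR hS hx₀
  refine ⟨z, l, hl, hlS, hz.resolve_right (hfree z), fun x y hxy => ?_⟩
  simpa only [List.mem_toFinset] using hcl hxy (by rintro rfl; exact hfree x hxy)

theorem exists_relPath_of_forall_exists_rel (hR : Relator.BiUnique R) {S : Finset α}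
    (hS : IsRelClosed R S) {x₀ : α} (hx₀ : x₀ ∈ S) (hsucc : ∀ x ∈ S, ∃ y, R x y) :
    ∃ z l, IsRelPath R x₀ z l ∧ (∀ x ∈ l, x ∈ S) ∧ R z x₀ ∧ IsRelClosed R l.toFinset := by
  obtain ⟨z, l, hl, hlS, hz, hcl⟩ := exists_relPath_orbit hR hS hx₀
  have hzl := hl.last_mem
  have hzx₀ : R z x₀ := hz.resolve_left fun h => (hsucc z (hlS z hzl)).elim h
  refine ⟨z, l, hl, hlS, hzx₀, fun x y hxy => ?_⟩
  simp only [List.mem_toFinset]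
  by_cases hy : y = x₀
  · subst hy
    rw [hR.1 hxy hzx₀]
    exact iff_of_true hzl hl.head_mem
  · exact hcl hxy hy

variable {w : α → ℝ} {T : Finset α}

theorem sum_nonneg_of_isRelClosed (hR : Relator.BiUnique R)
    (hchain : ∀ x₀ z l, IsRelPath R x₀ z l → (∀ x ∈ l, x ∈ T) → (∀ x, ¬R x x₀) →
      (∀ y, ¬R z y) → 0 ≤ (l.map w).sum)
    (hcycle : ∀ x₀ z l, IsRelPath R x₀ z l → (∀ x ∈ l, x ∈ T) → R z x₀ → 0 ≤ (l.map w).sum)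
    {S : Finset α} (hST : S ⊆ T) (hS : IsRelClosed R S) : 0 ≤ ∑ x ∈ S, w x := by
  induction S using Finset.strongInduction with
  | H S ih =>
  have remove : ∀ x₀ z l, IsRelPath R x₀ z l → (∀ x ∈ l, x ∈ S) →
      IsRelClosed R l.toFinset → 0 ≤ (l.map w).sum → 0 ≤ ∑ x ∈ S, w x := by
    intro x₀ z l hl hlS hcl hsum
    have hsub : l.toFinset ⊆ S := fun x hx => hlS x (List.mem_toFinset.1 hx)
    have hrest := ih _ (sdiff_ssubset hsub ⟨x₀, List.mem_toFinset.2 hl.head_mem⟩)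
      (sdiff_subset.trans hST) (hS.sdiff hcl)
    rw [← sum_sdiff hsub, List.sum_toFinset _ hl.nodup]
    linarith
  rcases S.eq_empty_or_nonempty with rfl | ⟨x₁, hx₁⟩
  · simp
  by_cases hfree : ∃ x₀ ∈ S, ∀ x, ¬R x x₀
  · obtain ⟨x₀, hx₀, hfree⟩ := hfree
    obtain ⟨z, l, hl, hlS, hz, hcl⟩ := exists_relPath_of_forall_not_rel hR hS hx₀ hfree
    exact remove x₀ z l hl hlS hcl (hchain x₀ z l hl (fun x hx => hST (hlS x hx)) hfree hz)
  · push Not at hfree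
    obtain ⟨z, l, hl, hlS, hz, hcl⟩ := exists_relPath_of_forall_exists_rel hR hS hx₁
      (forall_exists_rel_of_forall_exists_rel hR.2 hS hfree)
    exact remove x₁ z l hl hlS hcl (hcycle x₁ z l hl (fun x hx => hST (hlS x hx)) hz)

theorem le_sum_of_isRelClosed (hR : Relator.BiUnique R) {a : ℝ} (ha : 0 ≤ a)
    (hchain : ∀ x₀ z l, IsRelPath R x₀ z l → (∀ x ∈ l, x ∈ T) → (∀ x, ¬R x x₀) →
      (∀ y, ¬R z y) → a ≤ (l.map w).sum)
    (hcycle : ∀ x₀ z l, IsRelPath R x₀ z l → (∀ x ∈ l, x ∈ T) → R z x₀ → 0 ≤ (l.map w).sum)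
    {S : Finset α} (hST : S ⊆ T) (hS : IsRelClosed R S) {x₀ : α} (hx₀ : x₀ ∈ S)
    (hfree : ∀ x, ¬R x x₀) : a ≤ ∑ x ∈ S, w x := by
  obtain ⟨z, l, hl, hlS, hz, hcl⟩ := exists_relPath_of_forall_not_rel hR hS hx₀ hfree
  have hsub : l.toFinset ⊆ S := fun x hx => hlS x (List.mem_toFinset.1 hx)
  have hrest := sum_nonneg_of_isRelClosed (w := w) hR
    (fun x₀ z l hl hlT hx₀ hz => ha.trans (hchain x₀ z l hl hlT hx₀ hz)) hcycle
    (sdiff_subset.trans hST) (hS.sdiff hcl)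
  rw [← sum_sdiff hsub, List.sum_toFinset _ hl.nodup]
  linarith [hchain x₀ z l hl (fun x hx => hST (hlS x hx)) hfree hz]

end PartialInjection

section Matchings

variable {d : ℕ} {A B : Finset (Pt d)} {M Mopt : Finset (Pt d × Pt d)}

theorem IsMatching.eq_of_fst_eq (hM : IsMatching A B M) {e e' : Pt d × Pt d} (he : e ∈ M)
    (he' : e' ∈ M) (h : e.1 = e'.1) : e = e' :=
  hM.2.1 e he e' he' h

theorem IsMatching.eq_of_snd_eq (hM : IsMatching A B M) {e e' : Pt d × Pt d} (he : e ∈ M)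
    (he' : e' ∈ M) (h : e.2 = e'.2) : e = e' :=
  hM.2.2 e he e' he' h

theorem IsMatching.image_fst_eq_s11 (hM : IsMatching A B M) (hcard : M.card = A.card) :
    M.image Prod.fst = A :=
  eq_of_subset_of_card_le
    (fun _ hx => by obtain ⟨e, he, rfl⟩ := mem_image.1 hx; exact (hM.1 e he).1)
    (by rw [card_image_of_injOn fun e he e' he' => hM.eq_of_fst_eq he he', hcard])

theorem IsMatching.image_snd_eq_s11 (hM : IsMatching A B M) (hcard : M.card = B.card) :
    M.image Prod.snd = B :=
  eq_of_subset_of_card_le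
    (fun _ hx => by obtain ⟨e, he, rfl⟩ := mem_image.1 hx; exact (hM.1 e he).2)
    (by rw [card_image_of_injOn fun e he e' he' => hM.eq_of_snd_eq he he', hcard])

theorem exists_mem_forall_fst_ne (hcard : M.card < A.card) : ∃ a ∈ A, ∀ f ∈ M, f.1 ≠ a := by
  obtain ⟨a, haA, ha⟩ := exists_mem_notMem_of_card_lt_card
    (card_image_le.trans_lt hcard : (M.image Prod.fst).card < A.card)
  exact ⟨a, haA, fun f hf hfa => ha (mem_image.2 ⟨f, hf, hfa⟩)⟩

def IsNext (M Mopt : Finset (Pt d × Pt d)) (e e' : Pt d × Pt d) : Prop :=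
  e ∈ Mopt ∧ e' ∈ Mopt ∧ (e'.1, e.2) ∈ M

theorem isNext_biUnique (hM : IsMatching A B M) (hMopt : IsMatching A B Mopt) :
    Relator.BiUnique (IsNext M Mopt) :=
  ⟨fun _ _ _ h h' =>
      hMopt.eq_of_snd_eq h.1 h'.1 (Prod.ext_iff.1 (hM.eq_of_fst_eq h.2.2 h'.2.2 rfl)).2,
    fun _ _ _ h h' =>
      hMopt.eq_of_fst_eq h.2.1 h'.2.1 (Prod.ext_iff.1 (hM.eq_of_snd_eq h.2.2 h'.2.2 rfl)).1⟩

theorem isRelClosed_isNext : IsRelClosed (IsNext M Mopt) Mopt :=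
  fun _ _ h => iff_of_true h.1 h.2.1

theorem isNext_self_iff {e : Pt d × Pt d} (he : e ∈ Mopt) : IsNext M Mopt e e ↔ e ∈ M := by
  simp [IsNext, he]

theorem isFree_fst_of_forall_not_isNext (hAB : Disjoint A B) (hM : IsMatching A B M)
    (hMopt : IsMatching A B Mopt) (hsnd : Mopt.image Prod.snd = B) {e : Pt d × Pt d}
    (he : e ∈ Mopt)     (h : ∀ e', ¬IsNext M Mopt e' e) : IsFree M e.1 := by
  intro f hf
  refine ⟨fun hfe => ?_, fun hfe => disjoint_left.1 hAB (hMopt.1 e he).1 (hfe ▸ (hM.1 f hf).2)⟩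
  obtain ⟨e', he', he'f⟩ := mem_image.1 (hsnd ▸ (hM.1 f hf).2 : f.2 ∈ Mopt.image Prod.snd)
  exact h e' ⟨he', he, by rwa [← hfe, he'f]⟩

theorem isFree_snd_of_forall_not_isNext (hAB : Disjoint A B) (hM : IsMatching A B M)
    (hMopt : IsMatching A B Mopt) (hfst : Mopt.image Prod.fst = A) {e : Pt d × Pt d}
    (he : e ∈ Mopt)     (h : ∀ e', ¬IsNext M Mopt e e') : IsFree M e.2 := by
  intro f hf
  refine ⟨fun hfe => disjoint_left.1 hAB (hfe ▸ (hM.1 f hf).1) (hMopt.1 e he).2, fun hfe => ?_⟩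
  obtain ⟨e', he', he'f⟩ := mem_image.1 (hfst ▸ (hM.1 f hf).1 : f.1 ∈ Mopt.image Prod.fst)
  exact h e' ⟨he, he', by rwa [← hfe, he'f]⟩

def coverLen (M : Finset (Pt d × Pt d)) (b : Pt d) : ℝ :=
  ∑ f ∈ M with f.2 = b, dist f.1 f.2

theorem coverLen_eq (hM : IsMatching A B M) {a b : Pt d} (h : (a, b) ∈ M) :
    coverLen M b = dist a b := by
  rw [coverLen, sum_eq_single_of_mem (a, b) (mem_filter.2 ⟨h, (rfl : (a, b).2 = b)⟩)]
  intro f hf hne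
  exact absurd (hM.eq_of_snd_eq (mem_filter.1 hf).1 h (mem_filter.1 hf).2) hne

theorem coverLen_eq_zero {b : Pt d} (h : IsFree M b) : coverLen M b = 0 :=
  sum_eq_zero fun f hf => absurd (mem_filter.1 hf).2 (h f (mem_filter.1 hf).1).2

theorem sum_coverLen (hM : IsMatching A B M) (hMopt : IsMatching A B Mopt)
    (hsnd : Mopt.image Prod.snd = B) : ∑ e ∈ Mopt, coverLen M e.2 = matchCost M := by
  rw [← sum_image fun e he e' he' => hMopt.eq_of_snd_eq he he', hsnd]
  exact sum_fiberwise_of_maps_to (fun f hf => (hM.1 f hf).2) _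

def weight (c0 θ : ℝ) (M : Finset (Pt d × Pt d)) (e : Pt d × Pt d) : ℝ :=
  (1 + c0 * θ) * dist e.1 e.2 - (1 - c0 * θ) * coverLen M e.2

theorem sum_weight (c0 θ : ℝ) (hM : IsMatching A B M) (hMopt : IsMatching A B Mopt)
    (hsnd : Mopt.image Prod.snd = B) :
    ∑ e ∈ Mopt, weight c0 θ M e =
      (1 + c0 * θ) * matchCost Mopt - (1 - c0 * θ) * matchCost M := by
  simp only [weight, sum_sub_distrib, ← mul_sum, sum_coverLen hM hMopt hsnd, matchCost]

theorem weight_nonneg_of_mem {c0 θ : ℝ} (ht : 0 ≤ c0 * θ) (hM : IsMatching A B M) {e : Pt d × Pt d}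
    (he : e ∈ M) : 0 ≤ weight c0 θ M e := by
  rw [weight, coverLen_eq hM he]
  nlinarith [dist_nonneg (x := e.1) (y := e.2)]

end Matchings

section Walks

variable {d : ℕ} {A B : Finset (Pt d)} {M Mopt : Finset (Pt d × Pt d)}

def vertices (es : List (Pt d × Pt d)) : List (Pt d) :=
  es.flatMap fun e => [e.1, e.2]

def linkedEdges : List (Pt d × Pt d) → List (Pt d × Pt d)
  | [] => []
  | [e] => [e]
  | e :: e' :: es => e :: (e'.1, e.2) :: linkedEdges (e' :: es)

@[simp]
theorem vertices_cons (e : Pt d × Pt d) (es : List (Pt d × Pt d)) :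
    vertices (e :: es) = e.1 :: e.2 :: vertices es := by
  simp [vertices]

theorem length_vertices (es : List (Pt d × Pt d)) : (vertices es).length = 2 * es.length := by
  induction es with
  | nil => rfl
  | cons e es ih => simp [ih]; ring

theorem head?_vertices {es : List (Pt d × Pt d)} {e : Pt d × Pt d} (h : es.head? = some e) :
    (vertices es).head? = some e.1 := by
  obtain ⟨es, rfl⟩ : ∃ es', es = e :: es' := by
    cases es with
    | nil => simp at h
    | cons e' es => exact ⟨es, by simp_all⟩
  simp

theorem getLast?_vertices {es : List (Pt d × Pt d)} {z : Pt d × Pt d}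
    (h : es.getLast? = some z) : (vertices es).getLast? = some z.2 := by
  induction es with
  | nil => simp at h
  | cons e es ih =>
    cases es with
    | nil => simp_all [vertices]
    | cons e' es =>
      rw [List.getLast?_cons_cons] at h
      simpa using ih h

theorem pathEdges_cons (x y : Pt d) (l : List (Pt d)) :
    pathEdges A (x :: y :: l) = edgeOf A x y :: pathEdges A (y :: l) := by
  simp [pathEdges]

theorem pathEdges_append_singleton {l : List (Pt d)} {z : Pt d} (h : l.getLast? = some z)
    (x : Pt d) : pathEdges A (l ++ [x]) = pathEdges A l ++ [edgeOf A z x] := by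
  induction l with
  | nil => simp at h
  | cons y l ih =>
    cases l with
    | nil => simp_all [pathEdges]
    | cons y' l =>
      rw [List.getLast?_cons_cons] at h
      simp only [List.cons_append, pathEdges_cons] at ih ⊢
      rw [ih h]

theorem pathEdges_vertices {es : List (Pt d × Pt d)} (hes : ∀ e ∈ es, e.1 ∈ A ∧ e.2 ∉ A) :
    pathEdges A (vertices es) = linkedEdges es := by
  induction es using linkedEdges.induct with
  | case1 => rfl
  | case2 e => simp [vertices, pathEdges, linkedEdges, edgeOf, (hes e (by simp)).1]
  | case3 e e' es ih =>
    rw [vertices_cons, pathEdges_cons, vertices_cons, pathEdges_cons, ← vertices_cons,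
      ih fun f hf => hes f (List.mem_cons_of_mem _ hf), linkedEdges]
    simp [edgeOf, (hes e (by simp)).1, (hes e (by simp)).2]

theorem mem_vertices {p : Pt d} {es : List (Pt d × Pt d)} :
    p ∈ vertices es ↔ ∃ e ∈ es, p = e.1 ∨ p = e.2 := by
  simp [vertices]

theorem head?_linkedEdges {es : List (Pt d × Pt d)} {e : Pt d × Pt d} (h : es.head? = some e) :
    (linkedEdges es).head? = some e := by
  match es, h with
  | [_], rfl => rfl
  | _ :: _ :: _, rfl => rfl

theorem getLast?_linkedEdges {es : List (Pt d × Pt d)} {z : Pt d × Pt d}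
    (h : es.getLast? = some z) : (linkedEdges es).getLast? = some z := by
  induction es using linkedEdges.induct with
  | case1 => simp at h
  | case2 e => simpa [linkedEdges] using h
  | case3 e e' es ih =>
    rw [List.getLast?_cons_cons] at h
    have hne : linkedEdges (e' :: es) ≠ [] := by
      intro h'
      simpa [h'] using head?_linkedEdges (es := e' :: es) rfl
    rw [linkedEdges, List.getLast?_cons_cons, List.getLast?_cons, ← ih h,
      List.getLast?_eq_some_getLast hne]
    rfl

theorem nodup_vertices (hAB : Disjoint A B) (hMopt : IsMatching A B Mopt)
    {es : List (Pt d × Pt d)} (hsub : ∀ e ∈ es, e ∈ Mopt) (hnd : es.Nodup) :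
    (vertices es).Nodup := by
  have hAB' : ∀ {x y : Pt d}, x ∈ A → y ∈ B → x ≠ y := fun hx hy h =>
    disjoint_left.1 hAB hx (h ▸ hy)
  refine List.nodup_flatMap.2 ⟨fun e he => ?_, hnd.pairwise_of_forall_ne fun e he f hf hef => ?_⟩
  · have := hMopt.1 e (hsub e he)
    simpa using hAB' this.1 this.2
  · have he' := hMopt.1 e (hsub e he)
    have hf' := hMopt.1 f (hsub f hf)
    simp only [Function.onFun, List.disjoint_cons_left, List.disjoint_cons_right,
      List.mem_cons, List.not_mem_nil, or_false, not_or]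
    have hfst : f.1 ≠ e.1 := fun h => hef (hMopt.eq_of_fst_eq (hsub f hf) (hsub e he) h).symm
    have hsnd : f.2 ≠ e.2 := fun h => hef (hMopt.eq_of_snd_eq (hsub f hf) (hsub e he) h).symm
    exact ⟨⟨hfst, hAB' hf'.1 he'.2⟩, ⟨(hAB' he'.1 hf'.2).symm, hsnd⟩,
      not_false, not_false, List.disjoint_nil_left _⟩

end Walks

section Components

variable {d : ℕ} {A B : Finset (Pt d)} {M Mopt : Finset (Pt d × Pt d)}

theorem adjCost_cons (c0 θ : ℝ) (e : Pt d × Pt d) (E : List (Pt d × Pt d)) :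
    adjCost c0 θ M (e :: E) = (if e ∈ M then -dist e.1 e.2 else dist e.1 e.2) +
      c0 * θ * dist e.1 e.2 + adjCost c0 θ M E := by
  simp only [adjCost, netCost, eucLen, List.map_cons, List.sum_cons]
  ring

theorem adjCost_append (c0 θ : ℝ) (E E' : List (Pt d × Pt d)) :
    adjCost c0 θ M (E ++ E') = adjCost c0 θ M E + adjCost c0 θ M E' := by
  simp only [adjCost, netCost, eucLen, List.map_append, List.sum_append]
  ring

theorem adjCost_linkedEdges (c0 θ : ℝ) (hM : IsMatching A B M) {es : List (Pt d × Pt d)}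
    (hes : es.IsChain (IsNext M Mopt)) (hnot : ∀ e ∈ es, e ∉ M) {z : Pt d × Pt d}
    (hz : es.getLast? = some z) :
    adjCost c0 θ M (linkedEdges es) =
      (es.map (weight c0 θ M)).sum + (1 - c0 * θ) * coverLen M z.2 := by
  induction es using linkedEdges.induct with
  | case1 => simp at hz
  | case2 e =>
    obtain rfl : e = z := by simpa using hz
    simp [linkedEdges, hnot e, weight, adjCost, netCost, eucLen]
    ring
  | case3 e e' es ih =>
    obtain ⟨hnext, hes'⟩ := List.isChain_cons_cons.1 hes
    rw [List.getLast?_cons_cons] at hz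
    rw [linkedEdges, adjCost_cons, adjCost_cons,
      ih hes' (fun f hf => hnot f (List.mem_cons_of_mem _ hf)) hz, if_neg (hnot e (by simp)),
      if_pos hnext.2.2]
    simp only [List.map_cons, List.sum_cons, weight, coverLen_eq hM hnext.2.2]
    ring

theorem isChain_altRel_linkedEdges {es : List (Pt d × Pt d)} (hes : es.IsChain (IsNext M Mopt))
    (hnot : ∀ e ∈ es, e ∉ M) : (linkedEdges es).IsChain (AltRel M) := by
  induction es using linkedEdges.induct with
  | case1 => simp [linkedEdges]
  | case2 e => simp [linkedEdges]
  | case3 e e' es ih =>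
    obtain ⟨hnext, hes'⟩ := List.isChain_cons_cons.1 hes
    rw [linkedEdges, List.isChain_cons_cons, List.isChain_cons,
      head?_linkedEdges (es := e' :: es) rfl]
    refine ⟨iff_of_false (hnot e (by simp)) (not_not_intro hnext.2.2), ?_,
      ih hes' fun f hf => hnot f (List.mem_cons_of_mem _ hf)⟩
    rintro _ ⟨⟩
    exact iff_of_true hnext.2.2 (hnot e' (by simp))

theorem isChain_vertices_append {es : List (Pt d × Pt d)} (hes : ∀ e ∈ es, e.1 ∈ A ∧ e.2 ∈ B)
    {t : List (Pt d)} (ht : t.IsChain fun u v => (u ∈ A ∧ v ∈ B) ∨ (u ∈ B ∧ v ∈ A))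
    (hth : ∀ a ∈ t.head?, a ∈ A) :
    (vertices es ++ t).IsChain fun u v => (u ∈ A ∧ v ∈ B) ∨ (u ∈ B ∧ v ∈ A) := by
  suffices (vertices es ++ t).IsChain (fun u v => (u ∈ A ∧ v ∈ B) ∨ (u ∈ B ∧ v ∈ A)) ∧
      ∀ a ∈ (vertices es ++ t).head?, a ∈ A from this.1
  induction es with
  | nil => exact ⟨ht, hth⟩
  | cons e es ih =>
    obtain ⟨ih₁, ih₂⟩ := ih fun f hf => hes f (List.mem_cons_of_mem _ hf)
    obtain ⟨heA, heB⟩ := hes e (by simp)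
    simp only [vertices_cons, List.cons_append, List.isChain_cons,
      List.head?_cons, Option.mem_def, Option.some.injEq, forall_eq']
    exact ⟨⟨Or.inl ⟨heA, heB⟩, fun a ha => Or.inr ⟨heB, ih₂ a ha⟩, ih₁⟩, heA⟩

theorem forall_not_mem_of_isRelPath (hM : IsMatching A B M) (hMopt : IsMatching A B Mopt)
    {x₀ z : Pt d × Pt d} {es : List (Pt d × Pt d)} (hl : IsRelPath (IsNext M Mopt) x₀ z es)
    (hsub : ∀ e ∈ es, e ∈ Mopt) (hz : ¬IsNext M Mopt z z) : ∀ e ∈ es, e ∉ M := fun e he heM =>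
  hl.chain.forall_not_rel_self (isNext_biUnique hM hMopt).2 hl.nodup (by simpa [hl.last])
    e he ((isNext_self_iff (hsub e he)).2 heM)

theorem isAugPath_vertices (hAB : Disjoint A B) (hM : IsMatching A B M)
    (hMopt : IsMatching A B Mopt) (hfst : Mopt.image Prod.fst = A)
    (hsnd : Mopt.image Prod.snd = B) {x₀ z : Pt d × Pt d} {es : List (Pt d × Pt d)}
    (hl : IsRelPath (IsNext M Mopt) x₀ z es) (hsub : ∀ e ∈ es, e ∈ Mopt)
    (hx₀ : ∀ e, ¬IsNext M Mopt e x₀) (hz : ∀ e, ¬IsNext M Mopt z e) :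
    IsAugPath A B M (vertices es) ∧
      ∀ c0 θ, adjCost c0 θ M (pathEdges A (vertices es)) = (es.map (weight c0 θ M)).sum := by
  have hAB' : ∀ e ∈ es, e.1 ∈ A ∧ e.2 ∈ B := fun e he => hMopt.1 e (hsub e he)
  have hnot := forall_not_mem_of_isRelPath hM hMopt hl hsub (hz z)
  have hpath : pathEdges A (vertices es) = linkedEdges es := pathEdges_vertices fun e he =>
    ⟨(hAB' e he).1, disjoint_right.1 hAB (hAB' e he).2⟩
  have hzfree := isFree_snd_of_forall_not_isNext hAB hM hMopt hfst (hsub z hl.last_mem) hz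
  refine ⟨⟨⟨?_, nodup_vertices hAB hMopt hsub hl.nodup, fun p hp => ?_, ?_, ?_⟩, ?_, ?_⟩,
    fun c0 θ => ?_⟩
  · have := List.length_pos_of_mem hl.head_mem
    rw [length_vertices]
    omega
  · obtain ⟨e, he, rfl | rfl⟩ := mem_vertices.1 hp
    · exact mem_union_left _ (hAB' e he).1
    · exact mem_union_right _ (hAB' e he).2
  · have := isChain_vertices_append hAB' List.IsChain.nil (t := []) (by simp)
    rwa [List.append_nil] at this
  · rw [hpath]
    exact isChain_altRel_linkedEdges hl.chain hnot
  · rw [head?_vertices hl.head]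
    rintro _ ⟨⟩
    exact isFree_fst_of_forall_not_isNext hAB hM hMopt hsnd (hsub x₀ hl.head_mem) hx₀
  · rw [getLast?_vertices hl.last]
    rintro _ ⟨⟩
    exact hzfree
  · rw [hpath, adjCost_linkedEdges c0 θ hM hl.chain hnot hl.last, coverLen_eq_zero hzfree,
      mul_zero, add_zero]

theorem isAltCycle_vertices (hAB : Disjoint A B) (hM : IsMatching A B M)
    (hMopt : IsMatching A B Mopt) {x₀ z : Pt d × Pt d} {es : List (Pt d × Pt d)}
    (hl : IsRelPath (IsNext M Mopt) x₀ z es) (hsub : ∀ e ∈ es, e ∈ Mopt)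
    (hzx₀ : IsNext M Mopt z x₀) (hne : x₀ ≠ z) :
    IsAltCycle A B M (vertices es) ∧
      ∀ c0 θ, adjCost c0 θ M (cycleEdges A (vertices es)) = (es.map (weight c0 θ M)).sum := by
  have hAB' : ∀ e ∈ es, e.1 ∈ A ∧ e.2 ∈ B := fun e he => hMopt.1 e (hsub e he)
  have hnot := forall_not_mem_of_isRelPath hM hMopt hl hsub
    fun hzz => hne ((isNext_biUnique hM hMopt).2 hzx₀ hzz)
  have hzl := hl.last_mem
  have htake : (vertices es).take 1 = [x₀.1] := by
    rw [List.take_one, head?_vertices hl.head]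
    rfl
  have hcycle : cycleEdges A (vertices es) = linkedEdges es ++ [(x₀.1, z.2)] := by
    rw [cycleEdges, htake, pathEdges_append_singleton (getLast?_vertices hl.last),
      pathEdges_vertices fun e he => ⟨(hAB' e he).1, disjoint_right.1 hAB (hAB' e he).2⟩,
      edgeOf, if_neg (disjoint_right.1 hAB (hAB' z hzl).2)]
  have hwrap : (x₀.1, z.2) ∈ M := hzx₀.2.2
  refine ⟨⟨?_, nodup_vertices hAB hMopt hsub hl.nodup, fun p hp => ?_, ?_, ?_, ?_⟩,
    fun c0 θ => ?_⟩
  · have := hl.two_le_length hne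
    rw [length_vertices]
    omega
  · obtain ⟨e, he, rfl | rfl⟩ := mem_vertices.1 hp
    · exact mem_union_left _ (hAB' e he).1
    · exact mem_union_right _ (hAB' e he).2
  · rw [htake]
    exact isChain_vertices_append hAB' (List.isChain_singleton _)
      (by simpa using (hAB' x₀ hl.head_mem).1)
  · rw [hcycle]
    refine (isChain_altRel_linkedEdges hl.chain hnot).append (List.isChain_singleton _) ?_
    rw [getLast?_linkedEdges hl.last]
    rintro _ ⟨⟩ _ ⟨⟩
    exact iff_of_false (hnot z hzl) (not_not_intro hwrap)
  · rw [hcycle, List.head?_append, head?_linkedEdges hl.head, List.getLast?_concat]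
    rintro _ _ ⟨⟩ ⟨⟩
    exact iff_of_true hwrap (hnot x₀ hl.head_mem)
  · rw [hcycle, adjCost_append, adjCost_linkedEdges c0 θ hM hl.chain hnot hl.last, adjCost_cons,
      if_pos hwrap, coverLen_eq hM hwrap]
    simp only [adjCost, netCost, eucLen, List.map_nil, List.sum_nil]
    ring

end Components

section Bound

variable {d : ℕ} {A B : Finset (Pt d)} {M Mopt : Finset (Pt d × Pt d)}

theorem mem_pathEdges {L : List (Pt d)} {e : Pt d × Pt d} (he : e ∈ pathEdges A L) :
    e.1 ∈ L ∧ e.2 ∈ L := by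
  obtain ⟨⟨u, v⟩, huv, rfl⟩ := List.mem_map.1 he
  have hu := List.of_mem_zip huv
  have hv := List.mem_of_mem_tail hu.2
  unfold edgeOf
  split_ifs <;> simp [hu.1, hv]

theorem nodup_pathEdges {L : List (Pt d)} (hL : L.Nodup) : (pathEdges A L).Nodup := by
  induction L with
  | nil => simp [pathEdges]
  | cons x L ih =>
    cases L with
    | nil => simp [pathEdges]
    | cons y L =>
      rw [pathEdges_cons]
      refine List.nodup_cons.2 ⟨fun h => ?_, ih (List.nodup_cons.1 hL).2⟩
      have hx := mem_pathEdges h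
      unfold edgeOf at hx
      split_ifs at hx
      · exact (List.nodup_cons.1 hL).1 hx.1
      · exact (List.nodup_cons.1 hL).1 hx.2

theorem eucLen_le_netCost_add_two_mul_matchCost {E : List (Pt d × Pt d)} (hE : E.Nodup) :
    eucLen E ≤ netCost M E + 2 * matchCost M := by
  have hdiff : eucLen E - netCost M E = 2 * ∑ e ∈ E.toFinset with e ∈ M, dist e.1 e.2 := by
    rw [eucLen, netCost, ← List.sum_toFinset _ hE, ← List.sum_toFinset _ hE, ← sum_sub_distrib,
      mul_sum, sum_filter]
    refine sum_congr rfl fun e _ => ?_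
    split_ifs <;> ring
  have hle : ∑ e ∈ E.toFinset with e ∈ M, dist e.1 e.2 ≤ matchCost M :=
    sum_le_sum_of_subset_of_nonneg (fun e he => (mem_filter.1 he).2) fun _ _ _ => dist_nonneg
  linarith

theorem eucLen_le_adjCost_add_two_mul_matchCost {L : List (Pt d)} (hL : L.Nodup) {c0 θ : ℝ}
    (ht : 0 ≤ c0 * θ) :
    eucLen (pathEdges A L) ≤ adjCost c0 θ M (pathEdges A L) + 2 * matchCost M := by
  have hlen : 0 ≤ eucLen (pathEdges A L) :=
    List.sum_nonneg fun _ hx => by obtain ⟨_, _, rfl⟩ := List.mem_map.1 hx; exact dist_nonneg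
  have hnet : netCost M (pathEdges A L) ≤ adjCost c0 θ M (pathEdges A L) :=
    le_add_of_nonneg_right (mul_nonneg ht hlen)
  linarith [eucLen_le_netCost_add_two_mul_matchCost (M := M) (nodup_pathEdges (A := A) hL)]

theorem le_of_mem_lowerBounds_adjSet (hAB : Disjoint A B) (hM : IsMatching A B M)
    (hMopt : IsMatching A B Mopt) (hB : B.card = A.card) (hMopt_card : Mopt.card = A.card)
    (hM_card : M.card < A.card) {c0 θ : ℝ} (ht : 0 ≤ c0 * θ)
    (hcyc : ∀ L, IsAltCycle A B M L → 0 ≤ adjCost c0 θ M (cycleEdges A L)) {a : ℝ}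
    (ha : a ∈ lowerBounds (adjSet c0 θ A B M)) (ha₀ : 0 ≤ a) :
    a ≤ (1 + c0 * θ) * matchCost Mopt - (1 - c0 * θ) * matchCost M := by
  have hfst := hMopt.image_fst_eq_s11 hMopt_card
  have hsnd := hMopt.image_snd_eq_s11 (hMopt_card.trans hB.symm)
  obtain ⟨a₀, ha₀A, hfree⟩ := exists_mem_forall_fst_ne hM_card
  obtain ⟨x₀, hx₀, rfl⟩ := mem_image.1 (hfst ▸ ha₀A : a₀ ∈ Mopt.image Prod.fst)
  rw [← sum_weight c0 θ hM hMopt hsnd]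
  refine le_sum_of_isRelClosed (isNext_biUnique hM hMopt) ha₀
    (fun x₀ z l hl hlT hx₀ hz => ?_) (fun x₀ z l hl hlT hzx₀ => ?_) subset_rfl
    isRelClosed_isNext hx₀ fun e he => hfree _ he.2.2 rfl
  · obtain ⟨haug, hcost⟩ := isAugPath_vertices hAB hM hMopt hfst hsnd hl hlT hx₀ hz
    exact hcost c0 θ ▸ ha ⟨_, haug, rfl⟩
  · by_cases hne : x₀ = z
    · subst hne
      rw [hl.eq_singleton]
      simpa using weight_nonneg_of_mem ht hM ((isNext_self_iff (hlT _ hl.head_mem)).1 hzx₀)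
    · obtain ⟨hcycle, hcost⟩ := isAltCycle_vertices hAB hM hMopt hl hlT hzx₀ hne
      exact hcost c0 θ ▸ hcyc _ hcycle

end Bound

theorem stmt11_general (d n i : ℕ) (A B : Finset (Pt d)) (hAB : Disjoint A B)
    (hA : A.card = n) (hB : B.card = n)
    (ε c0 c1 εu εl : ℝ) (hε : 0 < ε) (hε1 : ε ≤ 1)
    (hc0 : 0 < c0) (hc1 : 8 * c0 ≤ c1) (hεu : εu = ε / c1)
    (hεl : 0 < εl)
    (M : Finset (Pt d × Pt d)) (hM : IsMatching A B M)
    (hMcard : M.card = i) (hin : i < n)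
    (Mopt : Finset (Pt d × Pt d)) (hMopt : IsMatching A B Mopt) (hMoptcard : Mopt.card = n)
    (hopt : matchCost Mopt ≤ 9 * Real.sqrt d * n / ε)
    (hMcost : matchCost M ≤ (1 + ε / 2) * matchCost Mopt)
    (hcyc : ∀ L : List (Pt d), IsAltCycle A B M L → 0 ≤ adjCost c0 εu M (cycleEdges A L))
    (astar : ℝ) (hastar : IsLeast (adjSet c0 εu A B M) astar) :
    ∀ L : List (Pt d), IsAugPath A B M L →
      adjCost c0 εl M (pathEdges A L) ≤ astar →
      eucLen (pathEdges A L) ≤ 27 * Real.sqrt d * n / ε := by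
  intro L hL hadj
  have hc1 : 0 < c1 := by linarith
  have ht : 0 ≤ c0 * εu := by rw [hεu]; positivity
  have htε : c0 * εu ≤ ε / 8 := by
    rw [hεu, mul_div_assoc', div_le_div_iff₀ hc1 (by norm_num)]
    nlinarith
  have hO : 0 ≤ matchCost Mopt := sum_nonneg fun _ _ => dist_nonneg
  have hlen := eucLen_le_adjCost_add_two_mul_matchCost (A := A) (M := M) hL.1.2.1
    (by positivity : 0 ≤ c0 * εl)
  have hstar : astar ≤ 0 ∨
      astar ≤ (1 + c0 * εu) * matchCost Mopt - (1 - c0 * εu) * matchCost M :=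
    (le_or_gt astar 0).imp_right fun h => le_of_mem_lowerBounds_adjSet hAB hM hMopt
      (hB.trans hA.symm) (hMoptcard.trans hA.symm) (by omega) ht hcyc hastar.2 h.le
  calc eucLen (pathEdges A L) ≤ 3 * matchCost Mopt := by
        rcases hstar with h | h <;>
        nlinarith [mul_le_mul_of_nonneg_right hε1 hO, mul_le_mul_of_nonneg_left hMcost ht,
          mul_le_mul_of_nonneg_right htε hO, mul_le_mul_of_nonneg_right htε (mul_nonneg hε.le hO),
          mul_le_mul_of_nonneg_right hε1 (mul_nonneg hε.le hO)]
    _ ≤ 3 * (9 * Real.sqrt d * n / ε) := by linarith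
    _ = 27 * Real.sqrt d * n / ε := by ring

/-- let `0 < ε ≤ 1`, `ε̄ = ε/c1` with `c1 ≥ 8·c0`, `0 < ε̲ ≤ ε̄`, and suppose
`cost(Mopt) ≤ 9·√d·n/ε`.  If `M` is a matching of size `i < n` with
`cost(M) ≤ (1 + ε/2)·cost(Mopt)` and every alternating cycle `Γ` satisfies
`adj_{ε̄,M}(Γ) ≥ 0`, then every augmenting path `Π` with `adj_{ε̲,M}(Π) ≤ adj*_{ε̄,M}`
satisfies `‖Π‖ ≤ 27·√d·n/ε`. -/
theorem stmt11 (d n i : ℕ) (hn : 1 ≤ n) (A B : Finset (Pt d)) (hAB : Disjoint A B)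
    (hA : A.card = n) (hB : B.card = n)
    (ε c0 c1 εu εl : ℝ) (hε : 0 < ε) (hε1 : ε ≤ 1)
    (hc0 : 0 < c0) (hc1 : 8 * c0 ≤ c1) (hεu : εu = ε / c1)
    (hεl : 0 < εl) (hεlu : εl ≤ εu)
    (M : Finset (Pt d × Pt d)) (hM : IsMatching A B M)
    (hMcard : M.card = i) (hin : i < n)
    (Mopt : Finset (Pt d × Pt d)) (hMopt : IsMatching A B Mopt) (hMoptcard : Mopt.card = n)
    (hMoptmin : ∀ M'' : Finset (Pt d × Pt d),
      IsMatching A B M'' → M''.card = n → matchCost Mopt ≤ matchCost M'')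
    (hopt : matchCost Mopt ≤ 9 * Real.sqrt d * n / ε)
    (hMcost : matchCost M ≤ (1 + ε / 2) * matchCost Mopt)
    (hcyc : ∀ L : List (Pt d), IsAltCycle A B M L → 0 ≤ adjCost c0 εu M (cycleEdges A L))
    (astar : ℝ) (hastar : IsLeast (adjSet c0 εu A B M) astar) :
    ∀ L : List (Pt d), IsAugPath A B M L →
      adjCost c0 εl M (pathEdges A L) ≤ astar →
      eucLen (pathEdges A L) ≤ 27 * Real.sqrt d * n / ε :=
  stmt11_general d n i A B hAB hA hB ε c0 c1 εu εl hε hε1 hc0 hc1 hεu hεl M hM hMcard hin Mopt hMopt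
    hMoptcard hopt hMcost hcyc astar hastar
end
end

section
/- Let 0 < ε ≤ 1, let ε̄ = ε/c1 with c1 ≥ 8·c0, and suppose cost(M_opt) ≤ 9·√d·n/ε. Let M_0, M_1, …, M_{n-1} be matchings between A and B with |M_i| = i and cost(M_i) ≤ (1 + ε/2)·cost(M_opt) for each i. Then Σ_{i=0}^{n-1} adj*_{ε̄,M_i} ≤ 12·√d·ε^{-1}·n·(1 + ln n). -/
open scoped Classical

noncomputable section

/-!
For a matching `M` of size `i`, every point of `A` left free by `M` starts an augmenting path:
follow its `Mopt`-edge, come back along the `M`-edge at the far end, and repeat until reaching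
a point of `B` that `M` leaves free. In its adjusted cost each `M`-edge carries the weight
`c0 ε̄ - 1 ≤ 0`, so the cost is at most `(1 + c0 ε̄)` times that of the `Mopt`-edges used.
Since `M` and `Mopt` are matchings, these `n - i` paths are vertex-disjoint, hence
`(n - i) · adj* ≤ (1 + ε/8) cost(Mopt)`. Summing over `i` gives a harmonic sum
`H_n ≤ 1 + ln n`, and `(9/8) · 9 ≤ 12`.
-/

namespace PartialOrbit

variable {α : Type*} (next : α → Option α)

def iter : ℕ → α → Option α
  | 0, a => some a
  | j + 1, a => (iter j a).bind next

def walk : ℕ → α → List α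
  | 0, _ => []
  | k + 1, a => a :: (next a).elim [] (walk k)

variable {next}

theorem iter_succ_of_next_eq_some {a a' : α} (h : next a = some a') (j : ℕ) :
    iter next (j + 1) a = iter next j a' := by
  induction j with
  | zero => simp [iter, h]
  | succ j ih => rw [iter, ih, iter]

theorem walk_succ_of_next_eq_none {a : α} (h : next a = none) (k : ℕ) :
    walk next (k + 1) a = [a] := by
  simp [walk, h]

theorem walk_succ_of_next_eq_some {a a' : α} (h : next a = some a') (k : ℕ) :
    walk next (k + 1) a = a :: walk next k a' := by
  simp [walk, h]

theorem walk_succ_ne_nil (k : ℕ) (a : α) : walk next (k + 1) a ≠ [] := by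
  simp [walk]

theorem head?_walk_succ (k : ℕ) (a : α) : (walk next (k + 1) a).head? = some a := rfl

theorem getElem?_walk : ∀ (k : ℕ) (a : α) (j : ℕ), j < (walk next k a).length →
    (walk next k a)[j]? = iter next j a
  | 0, a, j, hj => by simp [walk] at hj
  | k + 1, a, j, hj => by
    cases h : next a with
    | none =>
      rw [walk_succ_of_next_eq_none h] at hj ⊢
      obtain rfl : j = 0 := by simpa using hj
      rfl
    | some a' =>
      rw [walk_succ_of_next_eq_some h] at hj ⊢
      cases j with
      | zero => rfl
      | succ j =>
        rw [iter_succ_of_next_eq_some h]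
        exact getElem?_walk k a' j (by simpa using hj)

theorem exists_iter_eq_of_mem_walk {k : ℕ} {a x : α} (h : x ∈ walk next k a) :
    ∃ j, iter next j a = some x := by
  obtain ⟨j, hj, rfl⟩ := List.getElem_of_mem h
  exact ⟨j, by rw [← getElem?_walk k a j hj, List.getElem?_eq_getElem hj]⟩

theorem mem_walk {k : ℕ} {a x : α} (h : x ∈ walk next k a) :
    x = a ∨ ∃ y, next y = some x := by
  obtain ⟨j, hj⟩ := exists_iter_eq_of_mem_walk h
  cases j with
  | zero => exact Or.inl (Option.some.inj hj).symm
  | succ j =>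
    obtain ⟨y, -, hy⟩ := Option.bind_eq_some_iff.mp hj
    exact Or.inr ⟨y, hy⟩

theorem isChain_walk : ∀ (k : ℕ) (a : α), (walk next k a).IsChain fun x y => next x = some y
  | 0, _ => List.isChain_nil
  | k + 1, a => by
    cases h : next a with
    | none => simpa only [walk_succ_of_next_eq_none h] using List.isChain_singleton a
    | some a' =>
      rw [walk_succ_of_next_eq_some h]
      cases k with
      | zero => exact List.isChain_singleton a
      | succ k =>
        have ih := isChain_walk (k + 1) a'
        rw [walk] at ih ⊢
        exact ih.cons_cons h

theorem next_getLast_eq_none : ∀ {k : ℕ} {a x : α}, (walk next k a).length < k →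
    (walk next k a).getLast? = some x → next x = none
  | 0, _, _, hk, _ => absurd hk (Nat.lt_irrefl 0)
  | k + 1, a, x, hk, hx => by
    cases h : next a with
    | none =>
      rw [walk_succ_of_next_eq_none h, List.getLast?_singleton, Option.some.injEq] at hx
      exact hx ▸ h
    | some a' =>
      rw [walk_succ_of_next_eq_some h] at hk hx
      cases k with
      | zero => simp [walk] at hk
      | succ k =>
        rw [List.getLast?_cons_of_ne_nil (walk_succ_ne_nil k a')] at hx
        exact next_getLast_eq_none (by simpa using hk) hx

theorem eq_and_eq_of_iter_eq_some (hinj : ∀ x y z, next x = some z → next y = some z → x = y)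
    {a a' x : α} (ha : ∀ y, next y ≠ some a) (ha' : ∀ y, next y ≠ some a') {j j' : ℕ}
    (h : iter next j a = some x) (h' : iter next j' a' = some x) : a = a' ∧ j = j' := by
  induction j generalizing j' x with
  | zero =>
    cases j' with
    | zero => exact ⟨(Option.some.inj h).trans (Option.some.inj h').symm, rfl⟩
    | succ j' =>
      obtain ⟨y', -, hy'⟩ := Option.bind_eq_some_iff.mp h'
      exact absurd ((Option.some.inj h) ▸ hy') (ha y')
  | succ j ih =>
    obtain ⟨y, hy, hyx⟩ := Option.bind_eq_some_iff.mp h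
    cases j' with
    | zero => exact absurd ((Option.some.inj h') ▸ hyx) (ha' y)
    | succ j' =>
      obtain ⟨y', hy', hyx'⟩ := Option.bind_eq_some_iff.mp h'
      obtain rfl := hinj y y' x hyx hyx'
      obtain ⟨rfl, rfl⟩ := ih hy hy'
      exact ⟨rfl, rfl⟩

theorem walk_nodup (hinj : ∀ x y z, next x = some z → next y = some z → x = y) {a : α}
    (ha : ∀ y, next y ≠ some a) (k : ℕ) : (walk next k a).Nodup := by
  refine List.nodup_iff_injective_get.mpr fun ⟨j, hj⟩ ⟨j', hj'⟩ h => Fin.ext ?_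
  simp only [List.get_eq_getElem] at h
  have hx := getElem?_walk k a j hj
  have hx' := getElem?_walk k a j' hj'
  rw [List.getElem?_eq_getElem hj] at hx
  rw [List.getElem?_eq_getElem hj', ← h] at hx'
  exact (eq_and_eq_of_iter_eq_some hinj ha ha hx.symm hx'.symm).2

theorem disjoint_walk (hinj : ∀ x y z, next x = some z → next y = some z → x = y) {a a' : α}
    (ha : ∀ y, next y ≠ some a) (ha' : ∀ y, next y ≠ some a') (hne : a ≠ a') (k : ℕ) :
    (walk next k a).Disjoint (walk next k a') := by
  intro x hx hx'
  obtain ⟨j, hj⟩ := exists_iter_eq_of_mem_walk hx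
  obtain ⟨j', hj'⟩ := exists_iter_eq_of_mem_walk hx'
  exact hne (eq_and_eq_of_iter_eq_some hinj ha ha' hj hj').1

theorem next_ne_self_of_mem_walk (hinj : ∀ x y z, next x = some z → next y = some z → x = y)
    {a x : α} (ha : ∀ y, next y ≠ some a) {k : ℕ} (hx : x ∈ walk next k a) :
    next x ≠ some x := by
  intro hxx
  obtain ⟨j, hj⟩ := exists_iter_eq_of_mem_walk hx
  have hj' : iter next (j + 1) a = some x := by rw [iter, hj]; exact hxx
  exact absurd (eq_and_eq_of_iter_eq_some hinj ha ha hj hj').2 (Nat.succ_ne_self j).symm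

end PartialOrbit

namespace AltWalk

variable {d : ℕ} {A B : Finset (Pt d)} {M Mopt : Finset (Pt d × Pt d)} {a b : Pt d}

def partner (Mopt : Finset (Pt d × Pt d)) (a : Pt d) : Pt d :=
  if h : ∃ b, (a, b) ∈ Mopt then h.choose else a

def matchedTo (M : Finset (Pt d × Pt d)) (b : Pt d) : Option (Pt d) :=
  if h : ∃ a, (a, b) ∈ M then some h.choose else none

/-- The guard makes `altNext` injective, since `partner` is injective only on points covered
by `Mopt`. -/
def altNext (M Mopt : Finset (Pt d × Pt d)) (a : Pt d) : Option (Pt d) :=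
  if ∃ b, (a, b) ∈ Mopt then matchedTo M (partner Mopt a) else none

theorem mk_partner_mem (h : ∃ b, (a, b) ∈ Mopt) : (a, partner Mopt a) ∈ Mopt := by
  rw [partner, dif_pos h]
  exact h.choose_spec

theorem matchedTo_eq_some_iff (hM : IsMatching A B M) :
    matchedTo M b = some a ↔ (a, b) ∈ M := by
  by_cases h : ∃ a, (a, b) ∈ M
  · rw [matchedTo, dif_pos h, Option.some.injEq]
    exact ⟨fun e => e ▸ h.choose_spec,
      fun hab => congrArg Prod.fst (hM.2.2 _ h.choose_spec _ hab rfl)⟩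
  · rw [matchedTo, dif_neg h]
    exact ⟨nofun, fun hab => absurd ⟨a, hab⟩ h⟩

theorem matchedTo_eq_none_iff : matchedTo M b = none ↔ ∀ a, (a, b) ∉ M := by
  unfold matchedTo
  split_ifs with h <;> simpa using h

theorem altNext_eq_some_iff (hM : IsMatching A B M) {a' : Pt d} :
    altNext M Mopt a = some a' ↔ (∃ b, (a, b) ∈ Mopt) ∧ (a', partner Mopt a) ∈ M := by
  unfold altNext
  split_ifs with h
  · rw [matchedTo_eq_some_iff hM]
    exact ⟨fun h' => ⟨h, h'⟩, And.right⟩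
  · exact ⟨nofun, fun h' => absurd h'.1 h⟩

theorem altNext_injective (hM : IsMatching A B M) (hMopt : IsMatching A B Mopt) :
    ∀ x y z, altNext M Mopt x = some z → altNext M Mopt y = some z → x = y := by
  intro x y z hx hy
  obtain ⟨hxc, hzx⟩ := (altNext_eq_some_iff hM).mp hx
  obtain ⟨hyc, hzy⟩ := (altNext_eq_some_iff hM).mp hy
  have hpartner : partner Mopt x = partner Mopt y := congrArg Prod.snd (hM.2.1 _ hzx _ hzy rfl)
  exact congrArg Prod.fst (hMopt.2.2 _ (mk_partner_mem hxc) _ (mk_partner_mem hyc) hpartner)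

theorem altNext_ne_some_of_isFree (hM : IsMatching A B M) (ha : IsFree M a) (y : Pt d) :
    altNext M Mopt y ≠ some a := fun h =>
  (ha _ ((altNext_eq_some_iff hM).mp h).2).1 rfl

theorem altNext_eq_none_iff (h : ∃ b, (a, b) ∈ Mopt) :
    altNext M Mopt a = none ↔ ∀ x, (x, partner Mopt a) ∉ M := by
  rw [altNext, if_pos h, matchedTo_eq_none_iff]

def interleave (Mopt : Finset (Pt d × Pt d)) (w : List (Pt d)) : List (Pt d) :=
  w.flatMap fun x => [x, partner Mopt x]

def interleaveEdges (Mopt : Finset (Pt d × Pt d)) : List (Pt d) → List (Pt d × Pt d)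
  | [] => []
  | [x] => [(x, partner Mopt x)]
  | x :: y :: t => (x, partner Mopt x) :: (y, partner Mopt x) :: interleaveEdges Mopt (y :: t)

@[simp]
theorem interleave_nil : interleave Mopt [] = [] := rfl

@[simp]
theorem interleave_cons (x : Pt d) (t : List (Pt d)) :
    interleave Mopt (x :: t) = x :: partner Mopt x :: interleave Mopt t := rfl

theorem mem_interleave {w : List (Pt d)} {z : Pt d} :
    z ∈ interleave Mopt w ↔ ∃ x ∈ w, z = x ∨ z = partner Mopt x := by
  simp [interleave]

theorem pathEdges_interleave (hAB : Disjoint A B) (hMopt : IsMatching A B Mopt) :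
    ∀ w : List (Pt d), (∀ x ∈ w, (x, partner Mopt x) ∈ Mopt) →
      pathEdges A (interleave Mopt w) = interleaveEdges Mopt w
  | [], _ => rfl
  | [x], hw => by
    have hx : x ∈ A := (hMopt.1 _ (hw x (by simp))).1
    simp [pathEdges, interleaveEdges, edgeOf, hx]
  | x :: y :: t, hw => by
    have hx : x ∈ A := (hMopt.1 _ (hw x (by simp))).1
    have hpx : partner Mopt x ∉ A :=
      Finset.disjoint_right.mp hAB (hMopt.1 _ (hw x (by simp))).2
    have ih := pathEdges_interleave hAB hMopt (y :: t) fun z hz => hw z (by simp_all)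
    rw [interleave_cons] at ih
    rw [interleave_cons, interleave_cons, interleaveEdges, ← ih]
    simp [pathEdges, edgeOf, hx, hpx]

theorem nodup_interleave (hAB : Disjoint A B) (hMopt : IsMatching A B Mopt) {w : List (Pt d)}
    (hnd : w.Nodup) (hw : ∀ x ∈ w, (x, partner Mopt x) ∈ Mopt) :
    (interleave Mopt w).Nodup := by
  have hne : ∀ x ∈ w, ∀ y ∈ w, x ≠ partner Mopt y := fun x hx y hy h =>
    Finset.disjoint_left.mp hAB (hMopt.1 _ (hw x hx)).1 (h ▸ (hMopt.1 _ (hw y hy)).2)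
  refine List.nodup_flatMap.mpr
    ⟨fun x hx => ?_, hnd.pairwise_of_forall_ne fun x hx y hy hxy => ?_⟩
  · simpa using hne x hx x hx
  · have hp : partner Mopt x ≠ partner Mopt y := fun h =>
      hxy (congrArg Prod.fst (hMopt.2.2 _ (hw x hx) _ (hw y hy) h))
    simpa [Function.onFun] using
      ⟨⟨Ne.symm hxy, hne y hy x hx⟩, (hne x hx y hy).symm, Ne.symm hp⟩

theorem isChain_interleave (hMopt : IsMatching A B Mopt) :
    ∀ w : List (Pt d), (∀ x ∈ w, (x, partner Mopt x) ∈ Mopt) →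
      (interleave Mopt w).IsChain fun u v => (u ∈ A ∧ v ∈ B) ∨ (u ∈ B ∧ v ∈ A)
  | [], _ => List.isChain_nil
  | [x], hw => by
    simpa using Or.inl (hMopt.1 _ (hw x (by simp)))
  | x :: y :: t, hw => by
    have hx := hMopt.1 _ (hw x (by simp))
    have hy := hMopt.1 _ (hw y (by simp))
    have ih := isChain_interleave hMopt (y :: t) fun z hz => hw z (by simp_all)
    simp only [interleave_cons, List.isChain_cons_cons] at ih ⊢
    exact ⟨Or.inl hx, Or.inr ⟨hx.2, hy.1⟩, ih⟩

theorem isChain_altRel_interleaveEdges :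
    ∀ w : List (Pt d), w.IsChain (fun x y => (y, partner Mopt x) ∈ M) →
      (∀ x ∈ w, (x, partner Mopt x) ∉ M) → (interleaveEdges Mopt w).IsChain (AltRel M)
  | [], _, _ => List.isChain_nil
  | [x], _, _ => List.isChain_singleton _
  | x :: y :: t, hch, hnot => by
    rw [List.isChain_cons_cons] at hch
    have ih := isChain_altRel_interleaveEdges (y :: t) hch.2 fun z hz => hnot z (by simp_all)
    have hy : (y, partner Mopt y) ∉ M := hnot y (by simp)
    rw [interleaveEdges, List.isChain_cons_cons]
    refine ⟨⟨fun h => absurd h (hnot x (by simp)), fun h => absurd hch.1 h⟩, ?_⟩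
    cases t with
    | nil => exact List.isChain_pair.mpr ⟨fun _ => hy, fun _ => hch.1⟩
    | cons z t =>
      rw [interleaveEdges] at ih ⊢
      exact List.IsChain.cons_cons ⟨fun _ => hy, fun _ => hch.1⟩ ih

theorem netCost_add_mul_eucLen_interleaveEdges_le {t : ℝ} (ht : t ≤ 1) :
    ∀ w : List (Pt d), w.IsChain (fun x y => (y, partner Mopt x) ∈ M) →
      (∀ x ∈ w, (x, partner Mopt x) ∉ M) →
      netCost M (interleaveEdges Mopt w) + t * eucLen (interleaveEdges Mopt w) ≤
        (1 + t) * (w.map fun x => dist x (partner Mopt x)).sum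
  | [], _, _ => by simp [interleaveEdges, netCost, eucLen]
  | [x], _, hnot => by
    simp [interleaveEdges, netCost, eucLen, hnot x (by simp)]
    linarith
  | x :: y :: tl, hch, hnot => by
    rw [List.isChain_cons_cons] at hch
    have ih := netCost_add_mul_eucLen_interleaveEdges_le ht (y :: tl) hch.2
      fun z hz => hnot z (by simp_all)
    simp only [interleaveEdges, netCost, eucLen, List.map_cons, List.sum_cons,
      if_neg (hnot x (by simp)), if_pos hch.1] at ih ⊢
    nlinarith [dist_nonneg (x := y) (y := partner Mopt x)]

theorem head?_interleave (w : List (Pt d)) : (interleave Mopt w).head? = w.head? := by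
  cases w <;> rfl

theorem getLast?_interleave :
    ∀ w : List (Pt d), (interleave Mopt w).getLast? = w.getLast?.map (partner Mopt)
  | [] => rfl
  | [x] => rfl
  | x :: y :: t => by
    rw [interleave_cons, List.getLast?_cons_cons, List.getLast?_cons_of_ne_nil (by simp),
      List.getLast?_cons_cons, getLast?_interleave (y :: t)]

theorem isAugPath_interleave (hAB : Disjoint A B) (hM : IsMatching A B M)
    (hMopt : IsMatching A B Mopt) {w : List (Pt d)} (hne : w ≠ []) (hnd : w.Nodup)
    (hw : ∀ x ∈ w, (x, partner Mopt x) ∈ Mopt)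
    (hch : w.IsChain fun x y => (y, partner Mopt x) ∈ M)
    (hnot : ∀ x ∈ w, (x, partner Mopt x) ∉ M) (hhead : ∀ x ∈ w.head?, IsFree M x)
    (hlast : ∀ z ∈ w.getLast?, ∀ x, (x, partner Mopt z) ∉ M) :
    IsAugPath A B M (interleave Mopt w) := by
  obtain ⟨x, t, rfl⟩ := List.exists_cons_of_ne_nil hne
  refine ⟨⟨by simp, nodup_interleave hAB hMopt hnd hw, fun p hp => ?_,
    isChain_interleave hMopt _ hw, ?_⟩, fun p hp => ?_, fun p hp => ?_⟩
  · obtain ⟨y, hy, hpy | hpy⟩ := mem_interleave.mp hp <;> rw [hpy]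
    · exact Finset.mem_union_left _ (hMopt.1 _ (hw y hy)).1
    · exact Finset.mem_union_right _ (hMopt.1 _ (hw y hy)).2
  · rw [pathEdges_interleave hAB hMopt _ hw]
    exact isChain_altRel_interleaveEdges _ hch hnot
  · rw [head?_interleave] at hp
    exact hhead p hp
  · rw [getLast?_interleave, Option.map_eq_some_iff] at hp
    obtain ⟨z, hz, rfl⟩ := hp
    have hzB := (hMopt.1 _ (hw z (List.mem_of_getLast? hz))).2
    exact fun e he => ⟨fun h => Finset.disjoint_left.mp hAB (hM.1 e he).1 (h ▸ hzB),
      fun h => hlast z hz e.1 (h ▸ he)⟩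

/-- Fuel `#A + 1` suffices: from a free point the walk is a simple path inside `A`. -/
def augWalk (A : Finset (Pt d)) (M Mopt : Finset (Pt d × Pt d)) (a : Pt d) : List (Pt d) :=
  PartialOrbit.walk (altNext M Mopt) (A.card + 1) a

theorem mem_of_mem_augWalk (hM : IsMatching A B M) (ha : a ∈ A) {x : Pt d}
    (hx : x ∈ augWalk A M Mopt a) : x ∈ A := by
  rcases PartialOrbit.mem_walk hx with rfl | ⟨y, hy⟩
  · exact ha
  · exact (hM.1 _ ((altNext_eq_some_iff hM).mp hy).2).1

theorem augWalk_nodup (hM : IsMatching A B M) (hMopt : IsMatching A B Mopt)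
    (hfree : IsFree M a) :
    (augWalk A M Mopt a).Nodup :=
  PartialOrbit.walk_nodup (altNext_injective hM hMopt) (altNext_ne_some_of_isFree hM hfree) _

theorem mk_partner_notMem_of_mem_augWalk (hM : IsMatching A B M) (hMopt : IsMatching A B Mopt)
    (hcov : ∀ a ∈ A, ∃ b, (a, b) ∈ Mopt) (ha : a ∈ A) (hfree : IsFree M a) {x : Pt d}
    (hx : x ∈ augWalk A M Mopt a) : (x, partner Mopt x) ∉ M := fun hxM =>
  -- otherwise `x` would be a fixed point of `altNext`
  PartialOrbit.next_ne_self_of_mem_walk (altNext_injective hM hMopt)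
    (altNext_ne_some_of_isFree hM hfree) hx
    ((altNext_eq_some_iff hM).mpr ⟨hcov x (mem_of_mem_augWalk hM ha hx), hxM⟩)

theorem notMem_of_mem_getLast?_augWalk (hM : IsMatching A B M) (hMopt : IsMatching A B Mopt)
    (hcov : ∀ a ∈ A, ∃ b, (a, b) ∈ Mopt) (ha : a ∈ A) (hfree : IsFree M a) {z : Pt d}
    (hz : z ∈ (augWalk A M Mopt a).getLast?) (x : Pt d) : (x, partner Mopt z) ∉ M := by
  have hlen : (augWalk A M Mopt a).length < A.card + 1 := by
    rw [Nat.lt_succ_iff, ← List.toFinset_card_of_nodup (augWalk_nodup hM hMopt hfree)]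
    exact Finset.card_le_card fun y hy => mem_of_mem_augWalk hM ha (List.mem_toFinset.mp hy)
  have hzA := mem_of_mem_augWalk hM ha (List.mem_of_getLast? hz)
  exact (altNext_eq_none_iff (hcov z hzA)).mp (PartialOrbit.next_getLast_eq_none hlen hz) x

theorem exists_isAugPath_adjCost_le (hAB : Disjoint A B) (hM : IsMatching A B M)
    (hMopt : IsMatching A B Mopt) (hcov : ∀ a ∈ A, ∃ b, (a, b) ∈ Mopt) (ha : a ∈ A)
    (hfree : IsFree M a) {c0 θ : ℝ} (hθ : c0 * θ ≤ 1) :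
    ∃ L, IsAugPath A B M L ∧ adjCost c0 θ M (pathEdges A L) ≤
      (1 + c0 * θ) * ∑ x ∈ (augWalk A M Mopt a).toFinset, dist x (partner Mopt x) := by
  have hw : ∀ x ∈ augWalk A M Mopt a, (x, partner Mopt x) ∈ Mopt := fun x hx =>
    mk_partner_mem (hcov x (mem_of_mem_augWalk hM ha hx))
  have hch : (augWalk A M Mopt a).IsChain fun x y => (y, partner Mopt x) ∈ M :=
    (PartialOrbit.isChain_walk _ _).imp fun x y h => ((altNext_eq_some_iff hM).mp h).2
  have hnot := fun x => mk_partner_notMem_of_mem_augWalk hM hMopt hcov ha hfree (x := x)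
  refine ⟨interleave Mopt (augWalk A M Mopt a),
    isAugPath_interleave hAB hM hMopt (PartialOrbit.walk_succ_ne_nil _ _)
    (augWalk_nodup hM hMopt hfree) hw hch hnot ?_
    (fun _ hz => notMem_of_mem_getLast?_augWalk hM hMopt hcov ha hfree hz), ?_⟩
  · rw [augWalk, PartialOrbit.head?_walk_succ]
    rintro x ⟨⟩
    exact hfree
  · rw [adjCost, pathEdges_interleave hAB hMopt _ hw,
      List.sum_toFinset _ (augWalk_nodup hM hMopt hfree)]
    exact netCost_add_mul_eucLen_interleaveEdges_le hθ _ hch hnot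

theorem card_image_fst (hM : IsMatching A B M) : (M.image Prod.fst).card = M.card :=
  Finset.card_image_of_injOn fun e he e' he' h => hM.2.1 e he e' he' h

theorem image_fst_subset (hM : IsMatching A B M) : M.image Prod.fst ⊆ A := by
  intro x hx
  obtain ⟨e, he, rfl⟩ := Finset.mem_image.mp hx
  exact (hM.1 e he).1

theorem exists_mem_of_card_eq (hM : IsMatching A B M) (hcard : M.card = A.card) :
    ∀ a ∈ A, ∃ b, (a, b) ∈ M := by
  intro a ha
  rw [← Finset.eq_of_subset_of_card_le (image_fst_subset hM)
    (by rw [card_image_fst hM, hcard])] at ha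
  obtain ⟨⟨a, b⟩, he, rfl⟩ := Finset.mem_image.mp ha
  exact ⟨b, he⟩

theorem card_filter_isFree (hAB : Disjoint A B) (hM : IsMatching A B M) :
    (A.filter (IsFree M)).card = A.card - M.card := by
  have hfilter : A.filter (IsFree M) = A \ M.image Prod.fst := by
    ext a
    simp only [Finset.mem_filter, Finset.mem_sdiff, Finset.mem_image, not_exists, not_and,
      and_congr_right_iff]
    intro ha
    refine ⟨fun hfree e he h => (hfree e he).1 h, fun h e he => ⟨h e he, fun h2 => ?_⟩⟩
    exact Finset.disjoint_left.mp hAB ha (h2 ▸ (hM.1 e he).2)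
  rw [hfilter, Finset.card_sdiff_of_subset (image_fst_subset hM), card_image_fst hM]

theorem sum_dist_partner_le_matchCost (hcov : ∀ a ∈ A, ∃ b, (a, b) ∈ Mopt)
    {S : Finset (Pt d)} (hS : S ⊆ A) :
    ∑ x ∈ S, dist x (partner Mopt x) ≤ matchCost Mopt := by
  rw [matchCost, ← Finset.sum_image (g := fun x => (x, partner Mopt x))
    (f := fun e => dist e.1 e.2) fun x _ y _ h => congrArg Prod.fst h]
  refine Finset.sum_le_sum_of_subset_of_nonneg ?_ fun _ _ _ => dist_nonneg
  intro e he
  obtain ⟨x, hx, rfl⟩ := Finset.mem_image.mp he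
  exact mk_partner_mem (hcov x (hS hx))

theorem card_filter_isFree_mul_le (hAB : Disjoint A B) (hM : IsMatching A B M)
    (hMopt : IsMatching A B Mopt) (hcov : ∀ a ∈ A, ∃ b, (a, b) ∈ Mopt) {c0 θ s : ℝ}
    (hθ0 : 0 ≤ c0 * θ) (hθ1 : c0 * θ ≤ 1) (hs : s ∈ lowerBounds (adjSet c0 θ A B M)) :
    (A.filter (IsFree M)).card * s ≤ (1 + c0 * θ) * matchCost Mopt := by
  set F := A.filter (IsFree M)
  have hpath : ∀ a ∈ F,
      s ≤ (1 + c0 * θ) * ∑ x ∈ (augWalk A M Mopt a).toFinset, dist x (partner Mopt x) := by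
    intro a ha
    obtain ⟨ha, hfree⟩ := Finset.mem_filter.mp ha
    obtain ⟨L, hL, hcost⟩ := exists_isAugPath_adjCost_le hAB hM hMopt hcov ha hfree hθ1
    exact (hs ⟨L, hL, rfl⟩).trans hcost
  have hdisj : (F : Set (Pt d)).PairwiseDisjoint fun a => (augWalk A M Mopt a).toFinset := by
    intro a ha a' ha' hne
    rw [Function.onFun, List.disjoint_toFinset_iff_disjoint]
    exact PartialOrbit.disjoint_walk (altNext_injective hM hMopt)
      (altNext_ne_some_of_isFree hM (Finset.mem_filter.mp ha).2)
      (altNext_ne_some_of_isFree hM (Finset.mem_filter.mp ha').2) hne _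
  calc (F.card : ℝ) * s = ∑ a ∈ F, s := by rw [Finset.sum_const, nsmul_eq_mul]
    _ ≤ ∑ a ∈ F, (1 + c0 * θ) *
          ∑ x ∈ (augWalk A M Mopt a).toFinset, dist x (partner Mopt x) :=
        Finset.sum_le_sum hpath
    _ = (1 + c0 * θ) * ∑ x ∈ F.biUnion fun a => (augWalk A M Mopt a).toFinset,
          dist x (partner Mopt x) := by rw [Finset.sum_biUnion hdisj, Finset.mul_sum]
    _ ≤ (1 + c0 * θ) * matchCost Mopt := by
      refine mul_le_mul_of_nonneg_left (sum_dist_partner_le_matchCost hcov ?_) (by linarith)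
      intro x hx
      obtain ⟨a, ha, hx⟩ := Finset.mem_biUnion.mp hx
      exact mem_of_mem_augWalk hM (Finset.mem_filter.mp ha).1 (List.mem_toFinset.mp hx)

theorem le_div_of_mem_lowerBounds_adjSet (hAB : Disjoint A B) (hM : IsMatching A B M)
    (hMopt : IsMatching A B Mopt) (hcov : ∀ a ∈ A, ∃ b, (a, b) ∈ Mopt)
    (hlt : M.card < A.card) {c0 θ s : ℝ} (hθ0 : 0 ≤ c0 * θ) (hθ1 : c0 * θ ≤ 1)
    (hs : s ∈ lowerBounds (adjSet c0 θ A B M)) :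
    s ≤ (1 + c0 * θ) * matchCost Mopt / ((A.card : ℝ) - M.card) := by
  have h := card_filter_isFree_mul_le hAB hM hMopt hcov hθ0 hθ1 hs
  rw [card_filter_isFree hAB hM, Nat.cast_sub hlt.le] at h
  rw [le_div_iff₀ (sub_pos.mpr (mod_cast hlt))]
  linarith

end AltWalk

theorem sum_fin_inv_sub_le_one_add_log (n : ℕ) :
    ∑ i : Fin n, ((n : ℝ) - i)⁻¹ ≤ 1 + Real.log n := by
  have hrev : ∑ i : Fin n, ((n : ℝ) - i)⁻¹ = ∑ i : Fin n, ((i : ℝ) + 1)⁻¹ := by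
    rw [← Equiv.sum_comp Fin.revPerm]
    refine Finset.sum_congr rfl fun i _ => ?_
    rw [Fin.revPerm_apply, Fin.val_rev]
    have := i.isLt
    rw [Nat.cast_sub (by omega)]
    push_cast
    ring_nf
  calc ∑ i : Fin n, ((n : ℝ) - i)⁻¹ = harmonic n := by
        rw [hrev, harmonic, Fin.sum_univ_eq_sum_range (fun i => ((i : ℝ) + 1)⁻¹)]
        push_cast
        rfl
    _ ≤ 1 + Real.log n := harmonic_le_one_add_log n

theorem stmt13_general (d n : ℕ) (A B : Finset (Pt d)) (hAB : Disjoint A B)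
    (hA : A.card = n)
    (ε c0 c1 εu : ℝ) (hε : 0 < ε) (hε1 : ε ≤ 1)
    (hc0 : 0 < c0) (hc1 : 8 * c0 ≤ c1) (hεu : εu = ε / c1)
    (Mopt : Finset (Pt d × Pt d)) (hMopt : IsMatching A B Mopt) (hMoptcard : Mopt.card = n)
    (hopt : matchCost Mopt ≤ 9 * Real.sqrt d * n / ε)
    (M : Fin n → Finset (Pt d × Pt d))
    (hM : ∀ i : Fin n, IsMatching A B (M i))
    (hMcard : ∀ i : Fin n, (M i).card = i)
    (astar : Fin n → ℝ)
    (hastar : ∀ i : Fin n, IsLeast (adjSet c0 εu A B (M i)) (astar i)) :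
    ∑ i : Fin n, astar i ≤ 12 * Real.sqrt d * ε⁻¹ * n * (1 + Real.log n) := by
  have hcov := AltWalk.exists_mem_of_card_eq hMopt (hMoptcard.trans hA.symm)
  have hc1pos : 0 < c1 := by linarith
  have ht0 : 0 ≤ c0 * εu := by rw [hεu]; positivity
  have ht : c0 * εu ≤ 1 / 8 := by
    rw [hεu, mul_div_assoc', div_le_iff₀ hc1pos]
    nlinarith
  have hbound (i : Fin n) : astar i ≤ (1 + c0 * εu) * matchCost Mopt * ((n : ℝ) - i)⁻¹ := by
    have h := AltWalk.le_div_of_mem_lowerBounds_adjSet hAB (hM i) hMopt hcov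
      (by rw [hMcard i, hA]; exact i.isLt) ht0 (by linarith) (hastar i).2
    rwa [hA, hMcard i, div_eq_mul_inv] at h
  have hC : 0 ≤ matchCost Mopt := Finset.sum_nonneg fun _ _ => dist_nonneg
  calc ∑ i : Fin n, astar i
      ≤ (1 + c0 * εu) * matchCost Mopt * ∑ i : Fin n, ((n : ℝ) - i)⁻¹ := by
        rw [Finset.mul_sum]
        exact Finset.sum_le_sum fun i _ => hbound i
    _ ≤ (1 + c0 * εu) * matchCost Mopt * (1 + Real.log n) := by
        gcongr
        exact sum_fin_inv_sub_le_one_add_log n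
    _ ≤ 9 / 8 * (9 * Real.sqrt d * n / ε) * (1 + Real.log n) := by gcongr; linarith
    _ = 81 / 8 * (Real.sqrt d * ε⁻¹ * n * (1 + Real.log n)) := by ring
    _ ≤ 12 * Real.sqrt d * ε⁻¹ * n * (1 + Real.log n) := by
        have : 0 ≤ Real.sqrt d * ε⁻¹ * n * (1 + Real.log n) := by positivity
        linarith

/-- let `0 < ε ≤ 1`, `ε̄ = ε/c1` with `c1 ≥ 8·c0`, and suppose
`cost(Mopt) ≤ 9·√d·n/ε`.  If `M 0, …, M (n-1)` are matchings with `|M i| = i` and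
`cost(M i) ≤ (1 + ε/2)·cost(Mopt)`, then
`Σ_{i=0}^{n-1} adj*_{ε̄,M i} ≤ 12·√d·ε⁻¹·n·(1 + ln n)`. -/
theorem stmt13 (d n : ℕ) (hn : 1 ≤ n) (A B : Finset (Pt d)) (hAB : Disjoint A B)
    (hA : A.card = n) (hB : B.card = n)
    (ε c0 c1 εu : ℝ) (hε : 0 < ε) (hε1 : ε ≤ 1)
    (hc0 : 0 < c0) (hc1 : 8 * c0 ≤ c1) (hεu : εu = ε / c1)
    (Mopt : Finset (Pt d × Pt d)) (hMopt : IsMatching A B Mopt) (hMoptcard : Mopt.card = n)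
    (hMoptmin : ∀ M'' : Finset (Pt d × Pt d),
      IsMatching A B M'' → M''.card = n → matchCost Mopt ≤ matchCost M'')
    (hopt : matchCost Mopt ≤ 9 * Real.sqrt d * n / ε)
    (M : Fin n → Finset (Pt d × Pt d))
    (hM : ∀ i : Fin n, IsMatching A B (M i))
    (hMcard : ∀ i : Fin n, (M i).card = i)
    (hMcost : ∀ i : Fin n, matchCost (M i) ≤ (1 + ε / 2) * matchCost Mopt)
    (astar : Fin n → ℝ)
    (hastar : ∀ i : Fin n, IsLeast (adjSet c0 εu A B (M i)) (astar i)) :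
    ∑ i : Fin n, astar i ≤ 12 * Real.sqrt d * ε⁻¹ * n * (1 + Real.log n) :=
  stmt13_general d n A B hAB hA ε c0 c1 εu hε hε1 hc0 hc1 hεu Mopt hMopt hMoptcard hopt M hM hMcard
    astar hastar
end
end

section
/- Let H be a graph on vertex set A ∪ B such that for every pair of points p, q ∈ A ∪ B there is a path in H from p to q whose total Euclidean length is at most 2·‖p−q‖ (a Euclidean 2-spanner). Let M be a perfect matching between A and B, and let X ⊆ A ∪ B satisfy |X ∩ A| ≠ |X ∩ B|. Then H contains an edge (p′, q′) with exactly one endpoint in X such that ‖p′−q′‖ ≤ 2·cost(M). -/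
/-!
If every edge of the perfect matching `M` had both or neither endpoint in `X`, then `M` would
restrict to a bijection between `X ∩ A` and `X ∩ B`. So some matching edge `(a, b)` leaves `X`;
the spanner path between its endpoints has length at most `2‖a − b‖ ≤ 2·cost(M)`, and one of its
edges crosses from `X` to the complement.
-/

open scoped Classical

noncomputable section

/-- The total Euclidean length of a path given by its list of vertices. -/
def walkLen {d : ℕ} (L : List (Pt d)) : ℝ :=
  ((L.zip L.tail).map fun uv => dist uv.1 uv.2).sum

lemma walkLen_nonneg {d : ℕ} (L : List (Pt d)) : 0 ≤ walkLen L :=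
  List.sum_nonneg fun _ hx => by
    obtain ⟨uv, -, rfl⟩ := List.mem_map.mp hx
    exact dist_nonneg

lemma walkLen_cons_cons {d : ℕ} (a b : Pt d) (t : List (Pt d)) :
    walkLen (a :: b :: t) = dist a b + walkLen (b :: t) := by
  simp [walkLen]

lemma List.IsChain.exists_adj_boundary_dist_le_walkLen {d : ℕ} {Adj : Pt d → Pt d → Prop}
    {P : Pt d → Prop} :
    ∀ {L : List (Pt d)} {p q : Pt d}, L.head? = some p → L.getLast? = some q →
      L.IsChain Adj → P p → ¬P q → ∃ u v, Adj u v ∧ P u ∧ ¬P v ∧ dist u v ≤ walkLen L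
  | [], _, _, hp, _, _, _, _ => by simp at hp
  | [a], p, q, hp, hq, _, hPp, hPq => by
    simp only [List.head?_cons, List.getLast?_singleton, Option.some.injEq] at hp hq
    exact absurd (hq ▸ hp ▸ hPp) hPq
  | a :: b :: t, p, q, hp, hq, hc, hPp, hPq => by
    obtain rfl : a = p := Option.some.inj hp
    rw [List.isChain_cons_cons] at hc
    rw [walkLen_cons_cons]
    by_cases hPb : P b
    · have hq' : (b :: t).getLast? = some q := by rwa [List.getLast?_cons_cons] at hq
      obtain ⟨u, v, huv, hPu, hPv, hle⟩ :=
        exists_adj_boundary_dist_le_walkLen rfl hq' hc.2 hPb hPq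
      exact ⟨u, v, huv, hPu, hPv, by linarith [dist_nonneg (x := a) (y := b)]⟩
    · exact ⟨a, b, hc.1, hPp, hPb, by linarith [walkLen_nonneg (b :: t)]⟩

lemma card_inter_image_fst {α β : Type*} [DecidableEq α] {M : Finset (α × β)}
    (hM : Set.InjOn Prod.fst (M : Set (α × β))) (X : Finset α) :
    (X ∩ M.image Prod.fst).card = (M.filter fun e => e.1 ∈ X).card := by
  rw [Finset.inter_comm, ← Finset.filter_mem_eq_inter, Finset.filter_image,
    Finset.card_image_of_injOn (hM.mono (Finset.filter_subset _ M))]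

lemma card_inter_image_snd {α β : Type*} [DecidableEq β] {M : Finset (α × β)}
    (hM : Set.InjOn Prod.snd (M : Set (α × β))) (X : Finset β) :
    (X ∩ M.image Prod.snd).card = (M.filter fun e => e.2 ∈ X).card := by
  rw [Finset.inter_comm, ← Finset.filter_mem_eq_inter, Finset.filter_image,
    Finset.card_image_of_injOn (hM.mono (Finset.filter_subset _ M))]

namespace IsMatching

variable {d : ℕ} {A B : Finset (Pt d)} {M : Finset (Pt d × Pt d)}

lemma injOn_fst_s16 (hM : IsMatching A B M) : Set.InjOn Prod.fst (M : Set (Pt d × Pt d)) :=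
  fun e he e' he' => hM.2.1 e he e' he'

lemma injOn_snd_s16 (hM : IsMatching A B M) : Set.InjOn Prod.snd (M : Set (Pt d × Pt d)) :=
  fun e he e' he' => hM.2.2 e he e' he'

lemma image_fst_eq_s16 (hM : IsMatching A B M) (hA : A.card ≤ M.card) : M.image Prod.fst = A :=
  Finset.eq_of_subset_of_card_le
    (Finset.image_subset_iff.mpr fun e he => (hM.1 e he).1)
    (by rwa [Finset.card_image_of_injOn hM.injOn_fst_s16])

lemma image_snd_eq_s16 (hM : IsMatching A B M) (hB : B.card ≤ M.card) : M.image Prod.snd = B :=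
  Finset.eq_of_subset_of_card_le
    (Finset.image_subset_iff.mpr fun e he => (hM.1 e he).2)
    (by rwa [Finset.card_image_of_injOn hM.injOn_snd_s16])

lemma card_inter_eq_of_forall_mem_iff (hM : IsMatching A B M) (hA : A.card ≤ M.card)
    (hB : B.card ≤ M.card) {X : Finset (Pt d)} (hX : ∀ e ∈ M, e.1 ∈ X ↔ e.2 ∈ X) :
    (X ∩ A).card = (X ∩ B).card := by
  rw [← hM.image_fst_eq_s16 hA, ← hM.image_snd_eq_s16 hB, card_inter_image_fst hM.injOn_fst_s16,
    card_inter_image_snd hM.injOn_snd_s16, Finset.filter_congr hX]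

end IsMatching

lemma dist_le_matchCost {d : ℕ} {M : Finset (Pt d × Pt d)} {e : Pt d × Pt d} (he : e ∈ M) :
    dist e.1 e.2 ≤ matchCost M :=
  Finset.single_le_sum (fun _ _ => dist_nonneg) he

theorem stmt16_general (d n : ℕ) (A B : Finset (Pt d))
    (hA : A.card = n) (hB : B.card = n)
    (Adj : Pt d → Pt d → Prop)
    (hspanner : ∀ p ∈ A ∪ B, ∀ q ∈ A ∪ B,
      ∃ L : List (Pt d), L.head? = some p ∧ L.getLast? = some q ∧
        L.Chain' Adj ∧ walkLen L ≤ 2 * dist p q)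
    (M : Finset (Pt d × Pt d)) (hM : IsMatching A B M) (hMcard : M.card = n)
    (X : Finset (Pt d))
    (hXcard : (X ∩ A).card ≠ (X ∩ B).card) :
    ∃ p' q' : Pt d, Adj p' q' ∧
      ((p' ∈ X ∧ q' ∉ X) ∨ (p' ∉ X ∧ q' ∈ X)) ∧
      dist p' q' ≤ 2 * matchCost M := by
  obtain ⟨e, he, hcross⟩ : ∃ e ∈ M, ¬(e.1 ∈ X ↔ e.2 ∈ X) := by
    by_contra! h
    exact hXcard (hM.card_inter_eq_of_forall_mem_iff (hA.trans hMcard.symm).le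
      (hB.trans hMcard.symm).le h)
  have he₁ : e.1 ∈ A ∪ B := Finset.mem_union_left _ (hM.1 e he).1
  have he₂ : e.2 ∈ A ∪ B := Finset.mem_union_right _ (hM.1 e he).2
  obtain ⟨p, hp, q, hq, hpX, hqX, hpq⟩ : ∃ p ∈ A ∪ B, ∃ q ∈ A ∪ B,
      p ∈ X ∧ q ∉ X ∧ dist p q = dist e.1 e.2 := by
    by_cases h₁ : e.1 ∈ X
    · exact ⟨e.1, he₁, e.2, he₂, h₁, fun h₂ => hcross (iff_of_true h₁ h₂), rfl⟩
    · exact ⟨e.2, he₂, e.1, he₁, by tauto, h₁, dist_comm _ _⟩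
  obtain ⟨L, hLp, hLq, hL, hLlen⟩ := hspanner p hp q hq
  obtain ⟨u, v, huv, huX, hvX, hle⟩ :=
    List.IsChain.exists_adj_boundary_dist_le_walkLen hLp hLq hL hpX hqX
  exact ⟨u, v, huv, .inl ⟨huX, hvX⟩, by linarith [dist_le_matchCost he]⟩

/-- let `H` (given by its adjacency relation `Adj`) be a graph on vertex set
`A ∪ B` such that any two points `p, q ∈ A ∪ B` are joined by a path in `H` of total
Euclidean length at most `2·‖p−q‖` (a Euclidean 2-spanner).  Let `M` be a perfect matching
and `X ⊆ A ∪ B` with `|X ∩ A| ≠ |X ∩ B|`.  Then `H` has an edge `(p′, q′)` with exactly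
one endpoint in `X` and `‖p′−q′‖ ≤ 2·cost(M)`. -/
theorem stmt16 (d n : ℕ) (hn : 1 ≤ n) (A B : Finset (Pt d)) (hAB : Disjoint A B)
    (hA : A.card = n) (hB : B.card = n)
    (Adj : Pt d → Pt d → Prop)
    (hsym : ∀ u v, Adj u v → Adj v u)
    (hvert : ∀ u v, Adj u v → u ∈ A ∪ B ∧ v ∈ A ∪ B)
    (hspanner : ∀ p ∈ A ∪ B, ∀ q ∈ A ∪ B,
      ∃ L : List (Pt d), L.head? = some p ∧ L.getLast? = some q ∧
        L.Chain' Adj ∧ walkLen L ≤ 2 * dist p q)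
    (M : Finset (Pt d × Pt d)) (hM : IsMatching A B M) (hMcard : M.card = n)
    (X : Finset (Pt d)) (hX : X ⊆ A ∪ B)
    (hXcard : (X ∩ A).card ≠ (X ∩ B).card) :
    ∃ p' q' : Pt d, Adj p' q' ∧
      ((p' ∈ X ∧ q' ∉ X) ∨ (p' ∉ X ∧ q' ∈ X)) ∧
      dist p' q' ≤ 2 * matchCost M :=
  stmt16_general d n A B hA hB Adj hspanner M hM hMcard X hXcard
end
end
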